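/- arXiv:math/0503022 — 8 statements merged into one kernel-verified Lean document; each statement's English description precedes it below -/
import Mathlib

section
/- For each a, the Lagrangian 𝓛ₐ(x) = Σ_{n≥1} L(xₙ, xₙ₊₁) + L(a, x₁) is C¹ on ℓ²(ℕ), with partial derivatives ∂_{x₁}𝓛ₐ = 2x₁ - x₂ + h(x₁) - a and ∂_{xₙ}𝓛ₐ = 2xₙ - xₙ₊₁ - xₙ₋₁ + h(xₙ) for n ≥ 2; moreover if x ∈ ℓ²(ℕ) is a critical point of 𝓛ₐ, then setting x₀ = a and yₙ = xₙ₊₁ - xₙ - h(xₙ), one has Tⁿ(x₀, y₀) = (xₙ, yₙ) for all n ≥ 0. -/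
open intervalIntegral

noncomputable section
open scoped ENNReal
local notation "E2" => lp (fun _ : ℕ => ℝ) 2

lemma aux_rpow (t : ℝ) : ‖t‖ ^ (2:ℝ≥0∞).toReal = t ^ 2 := by
  rw [ENNReal.toReal_ofNat, show ((2:ℝ)) = ((2:ℕ):ℝ) by norm_num, Real.rpow_natCast]
  simp [sq_abs]

lemma aux_summable_sq (x : E2) : Summable (fun n => (x n)^2) := by
  have := (memℓp_gen_iff (p := 2) (by norm_num) (f := (x : ∀ _ : ℕ, ℝ))).1 (lp.memℓp x)
  exact (summable_congr fun n => (aux_rpow (x n)).symm).2 this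

lemma aux_memℓp (f : ℕ → ℝ) (hf : Summable (fun n => (f n)^2)) : Memℓp f 2 :=
  memℓp_gen ((summable_congr fun n => (aux_rpow (f n))).2 hf)

lemma aux_norm_sq_eq (x : E2) : ‖x‖^2 = ∑' n, (x n)^2 := by
  have := lp.norm_rpow_eq_tsum (p := 2) (by norm_num) x
  rw [show ((2:ℝ≥0∞).toReal) = ((2:ℕ):ℝ) by simp, Real.rpow_natCast] at this
  rw [this]
  exact tsum_congr fun n => by
    rw [show ((2:ℕ):ℝ) = (2:ℝ≥0∞).toReal by simp] at *; exact aux_rpow (x n)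

lemma aux_norm_le (f : E2) (b : ℝ) (hb : 0 ≤ b) (h : ∑' n, (f n)^2 ≤ b^2) : ‖f‖ ≤ b := by
  have h2 : ‖f‖^2 ≤ b^2 := by rw [aux_norm_sq_eq]; exact h
  calc ‖f‖ = Real.sqrt (‖f‖^2) := (Real.sqrt_sq (norm_nonneg f)).symm
    _ ≤ Real.sqrt (b^2) := Real.sqrt_le_sqrt h2
    _ = b := Real.sqrt_sq hb

lemma aux_summable_shift (x : E2) : Summable (fun n => (x (n+1))^2) :=
  (summable_nat_add_iff 1).2 (aux_summable_sq x)

/-- the shift operator on ℓ². -/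
def shiftCLM : E2 →L[ℝ] E2 :=
  LinearMap.mkContinuous
    { toFun := fun x => (⟨fun n => x (n+1), aux_memℓp _ (aux_summable_shift x)⟩ : E2)
      map_add' := fun x y => by ext n; simp [lp.coeFn_add, Pi.add_apply]; rfl
      map_smul' := fun c x => by ext n; simp [lp.coeFn_smul] }
    1 (fun x => by
      rw [one_mul]
      refine aux_norm_le _ _ (norm_nonneg x) ?_
      rw [aux_norm_sq_eq]
      refine Summable.tsum_le_tsum_of_inj (· + 1) (add_left_injective 1) (fun c _ => sq_nonneg _)
        (fun n => le_rfl) (aux_summable_shift x) (aux_summable_sq x))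

@[simp] lemma shiftCLM_apply (x : E2) (n : ℕ) : (shiftCLM x) n = x (n+1) := rfl

/-- A = id - shift : (Ax)ₙ = xₙ - xₙ₊₁ -/
def ACLM : E2 →L[ℝ] E2 := ContinuousLinearMap.id ℝ E2 - shiftCLM

@[simp] lemma ACLM_apply (x : E2) (n : ℕ) : (ACLM x) n = x n - x (n+1) := by
  simp [ACLM, lp.coeFn_sub]

lemma h_bounds (h : ℝ → ℝ) (hsmooth : ContDiff ℝ (⊤ : ℕ∞) h) (h0 : h 0 = 0) (h0' : deriv h 0 = 0)
    (R : ℝ) : ∃ M : ℝ, 0 ≤ M ∧ (∀ t : ℝ, |t| ≤ R → |h t| ≤ M * t^2) ∧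
    (∀ s t : ℝ, |s| ≤ R → |t| ≤ R → |h s - h t| ≤ M * |s - t|) := by
  have hsm : ContDiff ℝ (↑(⊤:ℕ∞)) h := hsmooth.of_le (by simp)
  have hd : Differentiable ℝ h := hsm.differentiable (by simp)
  have hd1 := (contDiff_infty_iff_deriv.1 hsm).2
  have hd1' : Differentiable ℝ (deriv h) := hd1.differentiable (by simp)
  obtain ⟨C₁, hC₁⟩ := (isCompact_Icc (a := -R) (b := R)).exists_bound_of_continuousOn
    (hd1.continuous.continuousOn)
  obtain ⟨C₂, hC₂⟩ := (isCompact_Icc (a := -R) (b := R)).exists_bound_of_continuousOn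
    ((contDiff_infty_iff_deriv.1 hd1).2.continuous.continuousOn)
  set M₁ := max C₁ 0 with hM₁
  set M₂ := max C₂ 0 with hM₂
  have hM₁0 : 0 ≤ M₁ := le_max_right _ _
  have hM₂0 : 0 ≤ M₂ := le_max_right _ _
  -- lipschitz of h on [-R,R] with constant M₁
  have lip : ∀ s t : ℝ, |s| ≤ R → |t| ≤ R → |h s - h t| ≤ M₁ * |s - t| := by
    intro s t hs ht
    have := (convex_Icc (-R) R).norm_image_sub_le_of_norm_deriv_le
      (f := h) (C := M₁) (fun u _ => hd u)
      (fun u hu => le_trans (hC₁ u hu) (le_max_left _ _))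
      (abs_le.1 ht) (abs_le.1 hs)
    simpa [Real.norm_eq_abs] using this
  -- |deriv h u| ≤ M₂ |u| on [-R, R]
  have derlip : ∀ u : ℝ, |u| ≤ R → |deriv h u| ≤ M₂ * |u| := by
    intro u hu
    have hR0 : (0:ℝ) ≤ R := le_trans (abs_nonneg u) hu
    have h0mem : (0:ℝ) ∈ Set.Icc (-R) R := by constructor <;> simp [hR0] <;> linarith
    have := (convex_Icc (-R) R).norm_image_sub_le_of_norm_deriv_le
      (f := deriv h) (C := M₂) (fun v _ => hd1' v)
      (fun v hv => le_trans (hC₂ v hv) (le_max_left _ _))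
      h0mem (abs_le.1 hu)
    simpa [Real.norm_eq_abs, h0'] using this
  -- quadratic bound
  have quad : ∀ t : ℝ, |t| ≤ R → |h t| ≤ M₂ * t^2 := by
    intro t ht
    have hmemt : t ∈ Set.Icc (-|t|) (|t|) := ⟨neg_abs_le t, le_abs_self t⟩
    have hmem0 : (0:ℝ) ∈ Set.Icc (-|t|) (|t|) := ⟨neg_nonpos_of_nonneg (abs_nonneg t), abs_nonneg t⟩
    have := (convex_Icc (-(|t|)) (|t|)).norm_image_sub_le_of_norm_deriv_le
      (f := h) (fun u _ => hd u)
      (C := M₂ * |t|)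
      (fun u hu => by
        have hu' : |u| ≤ |t| := abs_le.2 hu
        calc ‖deriv h u‖ = |deriv h u| := rfl
          _ ≤ M₂ * |u| := derlip u (le_trans hu' ht)
          _ ≤ M₂ * |t| := by nlinarith)
      hmem0 hmemt
    have : |h t - h 0| ≤ M₂ * |t| * |t - 0| := by simpa [Real.norm_eq_abs] using this
    rw [h0, sub_zero, sub_zero] at this
    calc |h t| ≤ M₂ * |t| * |t| := this
      _ = M₂ * t^2 := by rw [mul_assoc, abs_mul_abs_self, sq]
  refine ⟨max M₁ M₂, le_trans hM₁0 (le_max_left _ _), fun t ht => ?_, fun s t hs ht => ?_⟩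
  · exact le_trans (quad t ht) (by nlinarith [sq_nonneg t, le_max_right M₁ M₂])
  · exact le_trans (lip s t hs ht) (by nlinarith [abs_nonneg (s - t), le_max_left M₁ M₂])

lemma G_taylor (h : ℝ → ℝ) (hc : Continuous h) (G : ℝ → ℝ)
    (hG : ∀ x, G x = ∫ z in (0:ℝ)..x, h z) (M R : ℝ) (hM : 0 ≤ M)
    (hlip : ∀ s t : ℝ, |s| ≤ R → |t| ≤ R → |h s - h t| ≤ M * |s - t|) :
    ∀ s t : ℝ, |s| ≤ R → |s + t| ≤ R → |G (s+t) - G s - h s * t| ≤ M * t^2 := by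
  intro s t hs hst
  have hint : ∀ a b : ℝ, IntervalIntegrable h MeasureTheory.volume a b :=
    fun a b => hc.intervalIntegrable a b
  have e1 : G (s+t) - G s = ∫ z in s..(s+t), h z := by
    rw [hG, hG]
    exact intervalIntegral.integral_interval_sub_left (hint 0 (s+t)) (hint 0 s)
  have e2 : h s * t = ∫ z in s..(s+t), h s := by
    rw [intervalIntegral.integral_const]; ring_nf
  have e3 : G (s+t) - G s - h s * t = ∫ z in s..(s+t), (h z - h s) := by
    rw [e1, e2, intervalIntegral.integral_sub (hint s (s+t)) intervalIntegrable_const]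
  rw [e3]
  have key : ∀ z ∈ Set.uIoc s (s+t), ‖h z - h s‖ ≤ M * |t| := by
    intro z hz
    rcases hz with ⟨hz1, hz2⟩
    have hzR : |z| ≤ R := by
      rw [abs_le] at hs hst ⊢
      constructor
      · rcases le_or_gt s (s+t) with hc' | hc'
        · simp [hc'] at hz1; linarith
        · simp [not_le.2 hc', le_of_lt hc'] at hz1 ⊢; linarith
      · rcases le_or_gt s (s+t) with hc' | hc'
        · simp [hc'] at hz2; linarith
        · simp [not_le.2 hc', le_of_lt hc'] at hz2 ⊢; linarith
    have hzs : |z - s| ≤ |t| := by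
      rw [abs_le]
      rcases le_or_gt s (s+t) with hc' | hc'
      · simp [hc'] at hz1 hz2
        constructor <;> linarith [abs_nonneg t, le_abs_self t, neg_abs_le t]
      · simp [not_le.2 hc', le_of_lt hc'] at hz1 hz2
        constructor <;> linarith [abs_nonneg t, le_abs_self t, neg_abs_le t]
    calc ‖h z - h s‖ = |h z - h s| := rfl
      _ ≤ M * |z - s| := hlip z s hzR hs
      _ ≤ M * |t| := by nlinarith
  have := intervalIntegral.norm_integral_le_of_norm_le_const key
  calc |∫ z in s..(s+t), (h z - h s)| ≤ M * |t| * |s + t - s| := this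
    _ = M * t^2 := by rw [add_sub_cancel_left, mul_assoc, abs_mul_abs_self, sq]
/-- Generic: quadratic error bound gives differentiability. -/
lemma hasFDerivAt_of_quadratic_bound {F : Type*} [NormedAddCommGroup F] [NormedSpace ℝ F]
    (f : F → ℝ) (x : F) (D : F →L[ℝ] ℝ) (K : ℝ) (hK : 0 ≤ K)
    (hb : ∀ v : F, ‖v‖ ≤ 1 → |f (x + v) - f x - D v| ≤ K * ‖v‖^2) : HasFDerivAt f D x := by
  rw [hasFDerivAt_iff_isLittleO_nhds_zero]
  rw [Asymptotics.isLittleO_iff]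
  intro c hc
  rw [Metric.eventually_nhds_iff]
  refine ⟨min 1 (c/(K+1)), lt_min one_pos (by positivity), fun y hy => ?_⟩
  rw [dist_zero_right] at hy
  have hy1 : ‖y‖ ≤ 1 := le_of_lt (lt_of_lt_of_le hy (min_le_left _ _))
  have hy2 : ‖y‖ ≤ c/(K+1) := le_of_lt (lt_of_lt_of_le hy (min_le_right _ _))
  have hKy : K * ‖y‖ ≤ c := by
    have h1 : K * ‖y‖ ≤ K * (c/(K+1)) := mul_le_mul_of_nonneg_left hy2 hK
    have h2 : K * (c/(K+1)) ≤ c := by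
      rw [mul_div_assoc']
      rw [div_le_iff₀ (by linarith : (0:ℝ) < K+1)]
      nlinarith
    linarith
  calc ‖f (x + y) - f x - D y‖ = |f (x + y) - f x - D y| := rfl
    _ ≤ K * ‖y‖^2 := hb y hy1
    _ = (K * ‖y‖) * ‖y‖ := by ring
    _ ≤ c * ‖y‖ := mul_le_mul_of_nonneg_right hKy (norm_nonneg y)

open Classical in
/-- The map `H(x)ₙ = h(xₙ)` on `ℓ²`. -/
def Hmap (h : ℝ → ℝ) (x : E2) : E2 :=
  if mem : Memℓp (fun n => h (x n)) 2 then ⟨fun n => h (x n), mem⟩ else 0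

section withH

variable {h : ℝ → ℝ} (hsmooth : ContDiff ℝ (⊤ : ℕ∞) h) (h0 : h 0 = 0) (h0' : deriv h 0 = 0)

include hsmooth h0 h0'

lemma hmap_mem (x : E2) : Memℓp (fun n => h (x n)) 2 := by
  obtain ⟨M, hM0, hquad, -⟩ := h_bounds h hsmooth h0 h0' ‖x‖
  refine aux_memℓp _ (Summable.of_nonneg_of_le (fun n => sq_nonneg _) (fun n => ?_)
    (((aux_summable_sq x).mul_left (M^2 * ‖x‖^2))))
  have hxn : |x n| ≤ ‖x‖ := lp.norm_apply_le_norm (by norm_num) x n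
  have h1 : |h (x n)| ≤ M * (x n)^2 := hquad (x n) hxn
  have h2 : (h (x n))^2 ≤ (M * (x n)^2)^2 := by
    rw [← sq_abs (h (x n))]
    exact pow_le_pow_left₀ (abs_nonneg _) h1 2
  have h3 : (x n)^2 ≤ ‖x‖^2 := by
    rw [← sq_abs (x n)]; exact pow_le_pow_left₀ (abs_nonneg _) hxn 2
  calc (h (x n))^2 ≤ (M * (x n)^2)^2 := h2
    _ = M^2 * (x n)^2 * (x n)^2 := by ring
    _ ≤ M^2 * ‖x‖^2 * (x n)^2 := by
        nlinarith [mul_le_mul_of_nonneg_left h3 (mul_nonneg (sq_nonneg M) (sq_nonneg (x n)))]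

lemma hmap_apply (x : E2) (n : ℕ) : (Hmap h x) n = h (x n) := by
  rw [Hmap]
  rw [dif_pos (hmap_mem hsmooth h0 h0' x)]

/-- `H` is continuous. -/
lemma hmap_cont : Continuous (Hmap h) := by
  rw [continuous_iff_continuousAt]
  intro x
  obtain ⟨M, hM0, -, hlip⟩ := h_bounds h hsmooth h0 h0' (‖x‖ + 1)
  have key : ∀ y : E2, ‖y - x‖ ≤ 1 → ‖Hmap h y - Hmap h x‖ ≤ M * ‖y - x‖ := by
    intro y hyx
    refine aux_norm_le _ _ (by positivity) ?_
    have hcoord : ∀ n, ((Hmap h y - Hmap h x) n)^2 ≤ M^2 * ((y - x) n)^2 := by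
      intro n
      have e1 : (Hmap h y - Hmap h x) n = h (y n) - h (x n) := by
        rw [lp.coeFn_sub, Pi.sub_apply, hmap_apply hsmooth h0 h0', hmap_apply hsmooth h0 h0']
      have e2 : ((y - x) n) = y n - x n := by rw [lp.coeFn_sub, Pi.sub_apply]
      have hxn : |x n| ≤ ‖x‖ + 1 := le_trans (lp.norm_apply_le_norm (by norm_num) x n) (by linarith)
      have hyn : |y n| ≤ ‖x‖ + 1 := by
        have : |y n - x n| ≤ ‖y - x‖ := by
          have := lp.norm_apply_le_norm (p := 2) (by norm_num) (y - x) n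
          rwa [e2] at this
        have := abs_add_le (y n - x n) (x n)
        simp only [sub_add_cancel] at this
        have hx' : |x n| ≤ ‖x‖ := lp.norm_apply_le_norm (by norm_num) x n
        linarith
      have hl := hlip (y n) (x n) hyn hxn
      rw [e1, e2, ← sq_abs (h (y n) - h (x n)), ← sq_abs (y n - x n)]
      calc |h (y n) - h (x n)|^2 ≤ (M * |y n - x n|)^2 :=
            pow_le_pow_left₀ (abs_nonneg _) hl 2
        _ = M^2 * |y n - x n|^2 := by ring
    calc ∑' n, ((Hmap h y - Hmap h x) n)^2
        ≤ ∑' n, M^2 * ((y - x) n)^2 :=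
          Summable.tsum_le_tsum hcoord (aux_summable_sq _) ((aux_summable_sq _).mul_left _)
      _ = M^2 * ∑' n, ((y - x) n)^2 := tsum_mul_left
      _ = M^2 * ‖y - x‖^2 := by rw [aux_norm_sq_eq]
      _ = (M * ‖y - x‖)^2 := by ring
  rw [Metric.continuousAt_iff]
  intro ε hε
  refine ⟨min 1 (ε/(M+1)), lt_min one_pos (by positivity), fun {y} hy => ?_⟩
  rw [dist_eq_norm] at hy ⊢
  have hy1 : ‖y - x‖ ≤ 1 := le_of_lt (lt_of_lt_of_le hy (min_le_left _ _))
  have hy2 : ‖y - x‖ < ε/(M+1) := lt_of_lt_of_le hy (min_le_right _ _)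
  have := key y hy1
  have hlt : M * ‖y - x‖ < ε := by
    have h1 : M * ‖y - x‖ ≤ M * (ε/(M+1)) := mul_le_mul_of_nonneg_left (le_of_lt hy2) hM0
    have h2 : M * (ε/(M+1)) < ε := by
      rw [mul_div_assoc', div_lt_iff₀ (by linarith : (0:ℝ) < M+1)]
      nlinarith
    linarith
  linarith

end withH

lemma shift_norm_le (v : E2) : ‖shiftCLM v‖ ≤ ‖v‖ := by
  have h1 : ‖shiftCLM‖ ≤ 1 := LinearMap.mkContinuous_norm_le _ zero_le_one _
  calc ‖shiftCLM v‖ ≤ ‖shiftCLM‖ * ‖v‖ := shiftCLM.le_opNorm v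
    _ ≤ 1 * ‖v‖ := mul_le_mul_of_nonneg_right h1 (norm_nonneg v)
    _ = ‖v‖ := one_mul _

lemma ACLM_norm_le (v : E2) : ‖ACLM v‖ ≤ 2 * ‖v‖ := by
  have : ACLM v = v - shiftCLM v := rfl
  rw [this]
  calc ‖v - shiftCLM v‖ ≤ ‖v‖ + ‖shiftCLM v‖ := norm_sub_le _ _
    _ ≤ 2 * ‖v‖ := by linarith [shift_norm_le v]

lemma inner_eq_tsum_mul (x y : E2) : (inner ℝ x y : ℝ) = ∑' n, x n * y n := by
  rw [lp.inner_eq_tsum]; exact tsum_congr fun n => by simp [RCLike.inner_apply, mul_comm]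

lemma summable_coord_mul (x y : E2) : Summable (fun n => x n * y n) := by
  have := lp.summable_inner (𝕜 := ℝ) x y
  refine (summable_congr fun n => ?_).1 this
  simp [RCLike.inner_apply, mul_comm]

lemma inner_single_eval (w : E2) (n : ℕ) :
    (innerSL ℝ w) (lp.single 2 n (1:ℝ)) = w n := by
  have : (innerSL ℝ w) (lp.single 2 n (1:ℝ)) = (inner ℝ w (lp.single 2 n (1:ℝ)) : ℝ) := rfl
  rw [this, lp.inner_single_right]
  simp [RCLike.inner_apply]

lemma eval0_eq (v : E2) : (innerSL ℝ (lp.single 2 0 (1:ℝ))) v = v 0 := by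
  have : (innerSL ℝ (lp.single 2 0 (1:ℝ))) v = (inner ℝ (lp.single 2 0 (1:ℝ)) v : ℝ) := rfl
  rw [this, lp.inner_single_left]
  simp [RCLike.inner_apply]

/-- derivative of the quadratic part. -/
lemma Q_hasFDerivAt (x : E2) :
    HasFDerivAt (fun y : E2 => (1/2) * ‖ACLM y‖^2) ((innerSL ℝ (ACLM x)).comp ACLM) x := by
  refine hasFDerivAt_of_quadratic_bound _ _ _ 2 (by norm_num) ?_
  intro v _
  have happ : ((innerSL ℝ (ACLM x)).comp ACLM) v = (inner ℝ (ACLM x) (ACLM v) : ℝ) := rfl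
  have expand : ‖ACLM (x + v)‖^2
      = ‖ACLM x‖^2 + 2 * (inner ℝ (ACLM x) (ACLM v) : ℝ) + ‖ACLM v‖^2 := by
    rw [map_add]
    exact norm_add_sq_real _ _
  have key : (1/2) * ‖ACLM (x+v)‖^2 - (1/2) * ‖ACLM x‖^2 - (inner ℝ (ACLM x) (ACLM v) : ℝ)
      = (1/2) * ‖ACLM v‖^2 := by rw [expand]; ring
  rw [happ, key]
  have h1 : ‖ACLM v‖^2 ≤ (2*‖v‖)^2 := by
    have := ACLM_norm_le v
    exact pow_le_pow_left₀ (norm_nonneg _) this 2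
  rw [abs_of_nonneg (by positivity)]
  nlinarith [norm_nonneg v]

lemma summable_G (G : ℝ → ℝ) (C : ℝ) (hC : 0 ≤ C) (hGC : ∀ t, |G t| ≤ C * t^4) (y : E2) :
    Summable (fun n => G (y n)) := by
  refine Summable.of_norm_bounded ((aux_summable_sq y).mul_left (C * ‖y‖^2)) (fun n => ?_)
  have hyn : |y n| ≤ ‖y‖ := lp.norm_apply_le_norm (by norm_num) y n
  have h3 : (y n)^2 ≤ ‖y‖^2 := by
    rw [← sq_abs (y n)]; exact pow_le_pow_left₀ (abs_nonneg _) hyn 2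
  calc ‖G (y n)‖ = |G (y n)| := rfl
    _ ≤ C * (y n)^4 := hGC (y n)
    _ = C * (y n)^2 * (y n)^2 := by ring
    _ ≤ C * ‖y‖^2 * (y n)^2 := by
        nlinarith [mul_le_mul_of_nonneg_left h3 (mul_nonneg hC (sq_nonneg (y n)))]


section withH2

variable {h : ℝ → ℝ} (hsmooth : ContDiff ℝ (⊤ : ℕ∞) h) (h0 : h 0 = 0) (h0' : deriv h 0 = 0)

include hsmooth h0 h0'

lemma S_hasFDerivAt (G : ℝ → ℝ) (hG : ∀ t, G t = ∫ z in (0:ℝ)..t, h z)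
    (C : ℝ) (hC : 0 ≤ C) (hGC : ∀ t, |G t| ≤ C * t^4) (x : E2) :
    HasFDerivAt (fun y : E2 => ∑' n, G (y n)) (innerSL ℝ (Hmap h x)) x := by
  obtain ⟨M, hM0, hquad, hlip⟩ := h_bounds h hsmooth h0 h0' (‖x‖ + 1)
  have hGt := G_taylor h hsmooth.continuous G hG M (‖x‖+1) hM0 hlip
  refine hasFDerivAt_of_quadratic_bound _ _ _ M hM0 ?_
  intro v hv
  have hinner : (innerSL ℝ (Hmap h x)) v = ∑' n, h (x n) * v n := by
    have : (innerSL ℝ (Hmap h x)) v = (inner ℝ (Hmap h x) v : ℝ) := rfl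
    rw [this, inner_eq_tsum_mul]
    exact tsum_congr fun n => by rw [hmap_apply hsmooth h0 h0']
  have hsummul : Summable fun n => h (x n) * v n := by
    have := summable_coord_mul (Hmap h x) v
    exact (summable_congr fun n => by rw [hmap_apply hsmooth h0 h0']).1 this
  have hcoords : ∀ n, ((x + v) n) = x n + v n := fun n => by
    rw [lp.coeFn_add, Pi.add_apply]
  have split : (∑' n, G ((x+v) n)) - (∑' n, G (x n)) - (∑' n, h (x n) * v n)
      = ∑' n, (G (x n + v n) - G (x n) - h (x n) * v n) := by
    rw [← Summable.tsum_sub (summable_G G C hC hGC (x+v))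
        (summable_G G C hC hGC x),
      ← Summable.tsum_sub (((summable_G G C hC hGC (x+v)).congr
          (fun n => by rw [hcoords n])).sub
        (summable_G G C hC hGC x) |>.congr (fun n => by rw [← hcoords n]))
        hsummul]
    exact tsum_congr fun n => by rw [hcoords n]
  have hterm : ∀ n, |G (x n + v n) - G (x n) - h (x n) * v n| ≤ M * (v n)^2 := by
    intro n
    have hxn : |x n| ≤ ‖x‖ + 1 := le_trans (lp.norm_apply_le_norm (by norm_num) x n) (by linarith)
    have hxvn : |x n + v n| ≤ ‖x‖ + 1 := by
      have h1 : |x n| ≤ ‖x‖ := lp.norm_apply_le_norm (by norm_num) x n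
      have h2 : |v n| ≤ ‖v‖ := lp.norm_apply_le_norm (by norm_num) v n
      calc |x n + v n| ≤ |x n| + |v n| := abs_add_le _ _
        _ ≤ ‖x‖ + 1 := by linarith
    exact hGt (x n) (v n) hxn hxvn
  have habs : Summable (fun n => ‖G (x n + v n) - G (x n) - h (x n) * v n‖) :=
    Summable.of_nonneg_of_le (fun n => norm_nonneg _) hterm ((aux_summable_sq v).mul_left M)
  rw [hinner, split]
  calc |∑' n, (G (x n + v n) - G (x n) - h (x n) * v n)|
      ≤ ∑' n, ‖G (x n + v n) - G (x n) - h (x n) * v n‖ := norm_tsum_le_tsum_norm habs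
    _ ≤ ∑' n, M * (v n)^2 := Summable.tsum_le_tsum hterm habs ((aux_summable_sq v).mul_left M)
    _ = M * ∑' n, (v n)^2 := tsum_mul_left
    _ = M * ‖v‖^2 := by rw [aux_norm_sq_eq]

end withH2

/-- derivative of the boundary part. -/
lemma Bd_hasFDerivAt (a g0 : ℝ) (x : E2) :
    HasFDerivAt (fun y : E2 => (1/2) * (a - y 0)^2 + g0)
      ((x 0 - a) • innerSL ℝ (lp.single 2 0 (1:ℝ))) x := by
  set ev : E2 →L[ℝ] ℝ := innerSL ℝ (lp.single 2 0 (1:ℝ)) with hev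
  have hfun : (fun y : E2 => (1/2) * (a - y 0)^2 + g0)
      = (fun u : ℝ => (1/2) * (a - u)^2 + g0) ∘ ev := by
    have he : ∀ v : E2, ev v = v 0 := eval0_eq
    funext y; simp [Function.comp, he]
  have hφ : HasDerivAt (fun u : ℝ => (1/2) * (a - u)^2 + g0) (x 0 - a) (ev x) := by
    rw [hev, eval0_eq]
    have h1 : HasDerivAt (fun u : ℝ => a - u) (-1) (x 0) := (hasDerivAt_id _).const_sub a
    have h2 := h1.pow 2
    have h3 := (h2.const_mul (1/2 : ℝ)).add_const g0
    exact h3.congr_deriv (by norm_num; ring)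
  have := hφ.comp_hasFDerivAt x ev.hasFDerivAt
  rw [hfun]
  exact this

lemma ACLM_single_zero : ACLM (lp.single 2 0 (1:ℝ)) = lp.single 2 0 (1:ℝ) := by
  ext m
  rw [ACLM_apply, lp.single_apply_ne _ _ _ (Nat.succ_ne_zero m), sub_zero]

lemma ACLM_single_succ (n : ℕ) : ACLM (lp.single 2 (n+1) (1:ℝ))
    = lp.single 2 (n+1) (1:ℝ) - lp.single 2 n (1:ℝ) := by
  ext m
  rw [lp.coeFn_sub, Pi.sub_apply, ACLM_apply]
  by_cases hm : m = n
  · subst hm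
    rw [lp.single_apply_ne _ _ _ (by omega : m ≠ m+1), lp.single_apply_self,
      lp.single_apply_self]
  · rw [lp.single_apply_ne _ _ _ (by omega : m + 1 ≠ n + 1),
      lp.single_apply_ne _ _ _ (by omega : m ≠ n)]

lemma eval_coord_continuous : Continuous fun x : E2 => x 0 := by
  have heq : (fun x : E2 => x 0) = fun x : E2 => (innerSL ℝ ((lp.single 2 0 (1:ℝ)) : E2)) x :=
    funext fun x => (eval0_eq x).symm
  rw [heq]
  exact (innerSL ℝ ((lp.single 2 0 (1:ℝ)) : E2)).continuous


/-- The Lagrangian `𝓛ₐ(x) = Σ_{n≥1} L(xₙ,xₙ₊₁) + L(a,x₁)` is `C¹` on `ℓ²(ℕ)`, with the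
stated partial derivatives, and its critical points yield orbits of `T` starting at
`x₀ = a`, `yₙ = xₙ₊₁ - xₙ - h(xₙ)`.  (Here the coordinate `x n` of `x ∈ ℓ²(ℕ)`
represents `x_{n+1}` of the paper.) -/
theorem lagrangian_C1_and_critical_points_give_orbits
    (h : ℝ → ℝ) (hsmooth : ContDiff ℝ (⊤ : ℕ∞) h) (h0 : h 0 = 0) (h0' : deriv h 0 = 0)
    (G : ℝ → ℝ) (hG : ∀ x, G x = ∫ z in (0:ℝ)..x, h z)
    (C : ℝ) (hGC : ∀ x, |G x| ≤ C * x ^ 4)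
    (L : ℝ → ℝ → ℝ) (hL : ∀ x x₁, L x x₁ = (1/2) * (x - x₁) ^ 2 + G x)
    (T : ℝ × ℝ → ℝ × ℝ)
    (hT : ∀ p : ℝ × ℝ, T p = (p.1 + h p.1 + p.2, h p.1 + p.2))
    (a : ℝ)
    (La : lp (fun _ : ℕ => ℝ) 2 → ℝ)
    (hLa : ∀ x : lp (fun _ : ℕ => ℝ) 2,
      La x = (∑' n : ℕ, L (x n) (x (n + 1))) + L a (x 0)) :
    ContDiff ℝ 1 La ∧
    (∀ x : lp (fun _ : ℕ => ℝ) 2,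
      (fderiv ℝ La x) (lp.single 2 0 (1:ℝ)) = 2 * x 0 - x 1 + h (x 0) - a ∧
      ∀ n : ℕ, (fderiv ℝ La x) (lp.single 2 (n + 1) (1:ℝ))
          = 2 * x (n + 1) - x (n + 2) - x n + h (x (n + 1))) ∧
    (∀ x : lp (fun _ : ℕ => ℝ) 2, fderiv ℝ La x = 0 →
      ∀ X Y : ℕ → ℝ, X 0 = a → (∀ n, X (n + 1) = x n) →
        (∀ n, Y n = X (n + 1) - X n - h (X n)) →
        ∀ n : ℕ, T^[n] (X 0, Y 0) = (X n, Y n)) := by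
  have hC : 0 ≤ C := by
    have h1 := hGC 1
    have h2 := abs_nonneg (G 1)
    norm_num at h1
    linarith
  have hGC' : ∀ t : ℝ, |G t| ≤ C * t^4 := hGC
  -- the candidate derivative
  set Dmap : E2 → (E2 →L[ℝ] ℝ) := fun x =>
    (innerSL ℝ (ACLM x)).comp ACLM + innerSL ℝ (Hmap h x)
      + (x 0 - a) • innerSL ℝ ((lp.single 2 0 (1:ℝ)) : E2) with hD
  -- representation of La
  have hLarepr : La = fun y : E2 =>
      ((1/2) * ‖ACLM y‖^2 + ∑' n, G (y n)) + ((1/2) * (a - y 0)^2 + G a) := by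
    funext y
    rw [hLa y]
    have hsq : Summable (fun n => (1/2:ℝ) * (y n - y (n+1))^2) :=
      ((aux_summable_sq (ACLM y)).mul_left (1/2:ℝ)).congr
        (fun n => by rw [ACLM_apply])
    have hsG := summable_G G C hC hGC' y
    calc (∑' n, L (y n) (y (n+1))) + L a (y 0)
        = (∑' n, ((1/2) * (y n - y (n+1))^2 + G (y n))) + ((1/2) * (a - y 0)^2 + G a) := by
          rw [hL]
          congr 1
          exact tsum_congr fun n => hL _ _
      _ = ((∑' n, (1/2:ℝ) * (y n - y (n+1))^2) + ∑' n, G (y n))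
            + ((1/2) * (a - y 0)^2 + G a) := by rw [Summable.tsum_add hsq hsG]
      _ = ((1/2) * ‖ACLM y‖^2 + ∑' n, G (y n)) + ((1/2) * (a - y 0)^2 + G a) := by
          have : (∑' n, (1/2:ℝ) * (y n - y (n+1))^2) = (1/2) * ‖ACLM y‖^2 := by
            rw [aux_norm_sq_eq (ACLM y), ← tsum_mul_left]
            exact tsum_congr fun n => by rw [ACLM_apply]
          rw [this]
  have hderiv : ∀ x : E2, HasFDerivAt La (Dmap x) x := by
    intro x
    rw [hLarepr, hD]
    exact ((Q_hasFDerivAt x).add (S_hasFDerivAt hsmooth h0 h0' G hG C hC hGC' x)).add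
      (Bd_hasFDerivAt a (G a) x)
  have hfd : ∀ x : E2, fderiv ℝ La x = Dmap x := fun x => (hderiv x).fderiv
  -- partial derivatives
  have hpartial : ∀ x : lp (fun _ : ℕ => ℝ) 2,
      (fderiv ℝ La x) (lp.single 2 0 (1:ℝ)) = 2 * x 0 - x 1 + h (x 0) - a ∧
      ∀ n : ℕ, (fderiv ℝ La x) (lp.single 2 (n + 1) (1:ℝ))
          = 2 * x (n + 1) - x (n + 2) - x n + h (x (n + 1)) := by
    intro x
    constructor
    · rw [hfd x, hD]
      simp only [ContinuousLinearMap.add_apply, ContinuousLinearMap.coe_comp',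
        Function.comp_apply, ContinuousLinearMap.smul_apply, smul_eq_mul]
      rw [ACLM_single_zero, inner_single_eval, inner_single_eval, eval0_eq,
        ACLM_apply, hmap_apply hsmooth h0 h0', lp.single_apply_self]
      ring
    · intro n
      rw [hfd x, hD]
      simp only [ContinuousLinearMap.add_apply, ContinuousLinearMap.coe_comp',
        Function.comp_apply, ContinuousLinearMap.smul_apply, smul_eq_mul]
      rw [ACLM_single_succ, map_sub, inner_single_eval, inner_single_eval,
        inner_single_eval, eval0_eq, ACLM_apply, ACLM_apply,
        hmap_apply hsmooth h0 h0', lp.single_apply_ne _ _ _ (by omega : (0:ℕ) ≠ n + 1)]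
      ring
  refine ⟨?_, hpartial, ?_⟩
  · -- C¹
    rw [contDiff_one_iff_fderiv]
    refine ⟨fun x => (hderiv x).differentiableAt, ?_⟩
    have : (fderiv ℝ La) = Dmap := funext hfd
    rw [this, hD]
    have c1 : Continuous fun x : E2 => (innerSL ℝ (ACLM x)).comp ACLM := by
      have heq : (fun x : E2 => (innerSL ℝ (ACLM x)).comp ACLM)
          = fun x : E2 => (ContinuousLinearMap.compL ℝ E2 E2 ℝ).flip ACLM (innerSL ℝ (ACLM x)) :=
        rfl
      rw [heq]
      exact ((ContinuousLinearMap.compL ℝ E2 E2 ℝ).flip ACLM).continuous.comp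
        ((innerSL ℝ).continuous.comp ACLM.continuous)
    have c2 : Continuous fun x : E2 => innerSL ℝ (Hmap h x) :=
      (innerSL ℝ).continuous.comp (hmap_cont hsmooth h0 h0')
    have c3 : Continuous fun x : E2 =>
        (x 0 - a) • innerSL ℝ ((lp.single 2 0 (1:ℝ)) : E2) :=
      (eval_coord_continuous.sub continuous_const).smul continuous_const
    exact (c1.add c2).add c3
  · -- orbits
    intro x hcrit X Y hX0 hXn hYn
    have hp := hpartial x
    rw [hcrit] at hp
    simp only [ContinuousLinearMap.zero_apply] at hp
    obtain ⟨hp0, hpn⟩ := hp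
    have Xrec : ∀ n : ℕ, X (n+2) = 2 * X (n+1) - X n + h (X (n+1)) := by
      intro n
      rcases n with _ | m
      · rw [hXn 1, hXn 0, hX0]
        linarith [hp0]
      · rw [hXn (m+2), hXn (m+1), hXn m]
        linarith [hpn m]
    intro n
    induction n with
    | zero => simp
    | succ n ih =>
      rw [Function.iterate_succ_apply', ih, hT]
      simp only
      have hY := hYn n
      have hY' := hYn (n+1)
      have hrec := Xrec n
      refine Prod.ext ?_ ?_
      · simp only
        linarith
      · simp only
        linarith
end
end

section
/- Suppose (ζₙ)ₙ≥₁ ∈ ℓ²(ℕ) satisfies (2 + cₙ)ζₙ = ζₙ₊₁ + ζₙ₋₁ for all n ≥ 2 with coefficients cₙ ≥ 0, and (2 + c₁)ζ₁ - ζ₂ = d. Then |ζₙ| ≤ |ζ₁| ≤ |d| for all n ≥ 1. -/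
/-- If a square-summable sequence `(ζₙ)ₙ≥₁` satisfies `(2+cₙ)ζₙ = ζₙ₊₁ + ζₙ₋₁` for `n ≥ 2`
with `cₙ ≥ 0`, and `(2+c₁)ζ₁ - ζ₂ = d`, then `|ζₙ| ≤ |ζ₁| ≤ |d|` for all `n ≥ 1`.
(Here `z k` represents `ζ_{k+1}` and `c k` represents `c_{k+1}`.) -/
theorem ell2_tridiagonal_bound
    (z c : ℕ → ℝ) (hz : Memℓp z 2)
    (hc : ∀ n, 0 ≤ c n)
    (hrec : ∀ n : ℕ, 1 ≤ n → (2 + c n) * z n = z (n + 1) + z (n - 1))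
    (d : ℝ) (hd : (2 + c 0) * z 0 - z 1 = d) :
    ∀ n : ℕ, |z n| ≤ |z 0| ∧ |z 0| ≤ |d| := by
  -- z tends to 0
  have hs : Summable fun n => ‖z n‖ ^ (2 : ENNReal).toReal := hz.summable (by norm_num)
  have h3 : Filter.Tendsto (fun n => |z n| ^ (2 : ℕ)) Filter.atTop (nhds 0) := by
    have := hs.tendsto_atTop_zero
    have heq : (fun n => ‖z n‖ ^ (2 : ENNReal).toReal) = fun n => |z n| ^ (2 : ℕ) := by
      funext n
      rw [Real.norm_eq_abs]
      norm_num
    rwa [heq] at this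
  have htend : Filter.Tendsto (fun n => |z n|) Filter.atTop (nhds 0) := by
    have := (Real.continuous_sqrt.tendsto 0).comp h3
    simpa [Function.comp_def, Real.sqrt_sq_eq_abs, abs_abs] using this
  -- key: |z (n+1)| ≤ |z n|
  have dec : ∀ n, |z (n + 1)| ≤ |z n| := by
    intro n
    by_contra hlt
    push_neg at hlt
    have step : ∀ k, |z (n + k)| ≤ |z (n + k + 1)| := by
      intro k
      induction k with
      | zero => exact le_of_lt hlt
      | succ k ih =>
        have hr := hrec (n + k + 1) (by omega)
        have hr' : z (n + k + 1 + 1) = (2 + c (n + k + 1)) * z (n + k + 1) - z (n + k) := by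
          have : n + k + 1 - 1 = n + k := by omega
          rw [this] at hr
          linarith
        have h1 : |z (n + k + 1 + 1)| ≥ (2 + c (n + k + 1)) * |z (n + k + 1)| - |z (n + k)| := by
          rw [hr']
          have := abs_sub_abs_le_abs_sub ((2 + c (n + k + 1)) * z (n + k + 1)) (z (n + k))
          rw [abs_mul, abs_of_nonneg (by linarith [hc (n + k + 1)] : (0:ℝ) ≤ 2 + c (n + k + 1))] at this
          linarith
        have hc' := hc (n + k + 1)
        have habs := abs_nonneg (z (n + k + 1))
        show |z (n + k + 1)| ≤ |z (n + k + 1 + 1)|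
        nlinarith
    have mono : ∀ k, |z (n + 1)| ≤ |z (n + 1 + k)| := by
      intro k
      induction k with
      | zero => simp
      | succ k ih =>
        have h := step (k + 1)
        have he : n + (k + 1) = n + 1 + k := by omega
        rw [he] at h
        have he2 : n + 1 + k + 1 = n + 1 + (k + 1) := by omega
        rw [he2] at h
        exact le_trans ih h
    have hev : ∀ᶠ m in Filter.atTop, |z (n + 1)| ≤ |z m| := by
      filter_upwards [Filter.eventually_ge_atTop (n + 1)] with m hm
      have := mono (m - (n + 1))
      have he : n + 1 + (m - (n + 1)) = m := by omega
      rwa [he] at this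
    have : |z (n + 1)| ≤ 0 := ge_of_tendsto htend hev
    have := abs_nonneg (z n)
    linarith
  have hbound : ∀ n, |z n| ≤ |z 0| := by
    intro n
    induction n with
    | zero => exact le_refl _
    | succ n ih => exact le_trans (dec n) ih
  have h0d : |z 0| ≤ |d| := by
    have h1 := dec 0
    have h2 : |d| ≥ (2 + c 0) * |z 0| - |z 1| := by
      rw [← hd]
      have := abs_sub_abs_le_abs_sub ((2 + c 0) * z 0) (z 1)
      rw [abs_mul, abs_of_nonneg (by linarith [hc 0] : (0:ℝ) ≤ 2 + c 0)] at this
      linarith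
    have := hc 0
    have := abs_nonneg (z 0)
    nlinarith
  exact fun n => ⟨hbound n, h0d⟩
end

section
/- Define H(x,y) = (1/2)y² - G(x) + (1/2)h(x)y - (1/12)h'(x)y² + (1/12)h(x)². Then for the map T(x,y) = (x + h(x) + y, h(x) + y), one has H(T(x,y)) - H(x,y) = O(x⁸ + y⁴) as (x,y) → 0, i.e. there exist C, δ > 0 such that |H(T(x,y)) - H(x,y)| ≤ C(x⁸ + y⁴) for |x|, |y| ≤ δ. -/
open Set Finset

private lemma abs_le_of_mem_uIcc {s σ : ℝ} (hσ : σ ∈ Set.uIcc (0:ℝ) s) : |σ| ≤ |s| := by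
  rcases Set.mem_uIcc.mp hσ with ⟨h1, h2⟩ | ⟨h1, h2⟩ <;>
    rcases abs_cases s with ⟨e1, e2⟩ | ⟨e1, e2⟩ <;>
    rcases abs_cases σ with ⟨f1, f2⟩ | ⟨f1, f2⟩ <;> linarith

private lemma taylor_est : ∀ (n : ℕ) (f : ℝ → ℝ), ContDiff ℝ ((⊤:ℕ∞):WithTop ℕ∞) f →
    ∀ (M u s : ℝ), (∀ σ ∈ Set.uIcc (0:ℝ) s, |iteratedDeriv (n+1) f (u+σ)| ≤ M) →
    |f (u+s) - ∑ k ∈ Finset.range (n+1), iteratedDeriv k f u * s^k / (k.factorial)| ≤ M * |s|^(n+1) := by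
  intro n
  induction n with
  | zero =>
    intro f hf M u s hM
    have hdiff : Differentiable ℝ f := hf.differentiable (by simp)
    have hder : ∀ σ ∈ Set.uIcc (0:ℝ) s,
        HasDerivWithinAt (fun t => f (u+t)) (deriv f (u+σ)) (Set.uIcc (0:ℝ) s) σ := by
      intro σ _
      have h1 : HasDerivAt (fun t => f (u+t)) (deriv f (u+σ) * 1) σ :=
        HasDerivAt.comp σ (hdiff (u+σ)).hasDerivAt ((hasDerivAt_id σ).const_add u)
      simpa using h1.hasDerivWithinAt
    have hbd : ∀ σ ∈ Set.uIcc (0:ℝ) s, ‖deriv f (u+σ)‖ ≤ M := by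
      intro σ hσ
      have := hM σ hσ
      rwa [iteratedDeriv_one] at this
    have := Convex.norm_image_sub_le_of_norm_hasDerivWithin_le hder hbd (convex_uIcc _ _)
      (Set.left_mem_uIcc) (Set.right_mem_uIcc)
    simpa [Real.norm_eq_abs] using this
  | succ n ih =>
    intro f hf M u s hM
    have hM0 : 0 ≤ M := le_trans (abs_nonneg _) (hM 0 Set.left_mem_uIcc)
    have hdiff : Differentiable ℝ f := hf.differentiable (by simp)
    have hfd : ContDiff ℝ ((⊤:ℕ∞):WithTop ℕ∞) (deriv f) := (contDiff_infty_iff_deriv.mp hf).2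
    set c : ℕ → ℝ := fun k => iteratedDeriv k f u with hc
    set φ : ℝ → ℝ := fun σ => f (u+σ) - ∑ k ∈ Finset.range (n+2), c k * σ^k / (k.factorial) with hφ
    -- derivative of φ
    have hder : ∀ σ ∈ Set.uIcc (0:ℝ) s,
        HasDerivWithinAt φ
          (deriv f (u+σ) - ∑ k ∈ Finset.range (n+1), c (k+1) * σ^k / (k.factorial))
          (Set.uIcc (0:ℝ) s) σ := by
      intro σ _
      have h1 : HasDerivAt (fun t => f (u+t)) (deriv f (u+σ) * 1) σ :=
        HasDerivAt.comp σ (hdiff (u+σ)).hasDerivAt ((hasDerivAt_id σ).const_add u)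
      have h2 : HasDerivAt (fun t => ∑ k ∈ Finset.range (n+2), c k * t^k / (k.factorial))
          (∑ k ∈ Finset.range (n+2), c k * (k * σ^(k-1)) / (k.factorial)) σ := by
        apply HasDerivAt.fun_sum
        intro k _
        simpa [mul_div_assoc] using
          (((hasDerivAt_pow k σ).const_mul (c k)).div_const ((k.factorial : ℝ)))
      have hsum : ∑ k ∈ Finset.range (n+2), c k * (k * σ^(k-1)) / (k.factorial)
          = ∑ k ∈ Finset.range (n+1), c (k+1) * σ^k / (k.factorial) := by
        rw [Finset.sum_range_succ' (fun k => c k * (k * σ^(k-1)) / (k.factorial)) (n+1)]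
        simp only [Nat.cast_zero, zero_mul, mul_zero, zero_div, add_zero, pow_zero,
          Nat.factorial_zero]
        apply Finset.sum_congr rfl
        intro k _
        have hfac : ((k+1).factorial : ℝ) = (k+1) * (k.factorial) := by
          push_cast [Nat.factorial_succ]; ring
        have hne : ((k:ℝ)+1) ≠ 0 := by positivity
        have hfne : ((k.factorial : ℝ)) ≠ 0 := by positivity
        field_simp [hfac]
        rw [Nat.add_sub_cancel, hfac]
        push_cast
        ring
      rw [← hsum]
      exact ((h1.sub h2).congr_deriv (by ring)).hasDerivWithinAt
    -- bound on derivative of φ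
    have hbd : ∀ σ ∈ Set.uIcc (0:ℝ) s,
        ‖deriv f (u+σ) - ∑ k ∈ Finset.range (n+1), c (k+1) * σ^k / (k.factorial)‖
          ≤ M * |s|^(n+1) := by
      intro σ hσ
      have hMσ : ∀ τ ∈ Set.uIcc (0:ℝ) σ, |iteratedDeriv (n+1) (deriv f) (u+τ)| ≤ M := by
        intro τ hτ
        have hsub : Set.uIcc (0:ℝ) σ ⊆ Set.uIcc (0:ℝ) s :=
          Set.uIcc_subset_uIcc Set.left_mem_uIcc hσ
        have : iteratedDeriv (n+1) (deriv f) = iteratedDeriv (n+2) f :=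
          (iteratedDeriv_succ' (n := n+1) (f := f)).symm
        rw [this]
        exact hM τ (hsub hτ)
      have := ih (deriv f) hfd M u σ hMσ
      have hcoef : ∀ k, iteratedDeriv k (deriv f) u = c (k+1) := by
        intro k
        simp only [hc]
        exact (congrFun (iteratedDeriv_succ' (n := k) (f := f)) u).symm
      rw [Real.norm_eq_abs]
      calc |deriv f (u+σ) - ∑ k ∈ Finset.range (n+1), c (k+1) * σ^k / (k.factorial)|
          = |deriv f (u+σ) - ∑ k ∈ Finset.range (n+1),
              iteratedDeriv k (deriv f) u * σ^k / (k.factorial)| := by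
            congr 1
            congr 1
            exact Finset.sum_congr rfl (fun k _ => by rw [hcoef k])
        _ ≤ M * |σ|^(n+1) := this
        _ ≤ M * |s|^(n+1) := by
            apply mul_le_mul_of_nonneg_left _ hM0
            exact pow_le_pow_left₀ (abs_nonneg _) (abs_le_of_mem_uIcc hσ) _
    have hmvt := Convex.norm_image_sub_le_of_norm_hasDerivWithin_le hder hbd (convex_uIcc _ _)
      (Set.left_mem_uIcc) (Set.right_mem_uIcc)
    have hφ0 : φ 0 = 0 := by
      rw [hφ]
      simp only [add_zero]
      rw [Finset.sum_range_succ' (fun k => c k * (0:ℝ)^k / (k.factorial)) (n+1)]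
      simp [hc]
    have hφs : φ s = f (u+s) - ∑ k ∈ Finset.range (n+2), c k * s^k / (k.factorial) := rfl
    rw [hφ0, hφs] at hmvt
    simp only [sub_zero, Real.norm_eq_abs] at hmvt
    calc |f (u+s) - ∑ k ∈ Finset.range (n+1+1), iteratedDeriv k f u * s^k / (k.factorial)|
        = |f (u+s) - ∑ k ∈ Finset.range (n+2), c k * s^k / (k.factorial)| := by rw [hc]
      _ ≤ M * |s|^(n+1) * |s| := hmvt
      _ = M * |s|^(n+1+1) := by ring

open intervalIntegral

private lemma quad_bound (u v : ℝ) (hu : 0 ≤ u) (hv : 0 ≤ v) :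
    (u+v)^4 ≤ 8*u^4 + 8*v^4 := by
  nlinarith [sq_nonneg (u-v), sq_nonneg (u+v), sq_nonneg (u^2-v^2), mul_nonneg hu hv,
    sq_nonneg (u*v)]

set_option maxHeartbeats 2000000 in
/-- For `H(x,y) = (1/2)y² - G(x) + (1/2)h(x)y - (1/12)h'(x)y² + (1/12)h(x)²` and
`T(x,y) = (x + h(x) + y, h(x) + y)`, one has `H(T(x,y)) - H(x,y) = O(x⁸ + y⁴)`
as `(x,y) → 0`. -/
theorem quasi_hamiltonian_almost_conserved
    (h : ℝ → ℝ) (hsmooth : ContDiff ℝ (⊤ : ℕ∞) h) (hodd : ∀ x, h (-x) = -h x)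
    (b : ℝ) (hb : 0 < b)
    (C₅ : ℝ) (hh : ∀ x : ℝ, |x| ≤ 1 → |h x - b * x ^ 3| ≤ C₅ * |x| ^ 5)
    (G : ℝ → ℝ) (hG : ∀ x, G x = ∫ z in (0:ℝ)..x, h z)
    (H : ℝ → ℝ → ℝ)
    (hH : ∀ x y, H x y = (1/2) * y ^ 2 - G x + (1/2) * h x * y
        - (1/12) * deriv h x * y ^ 2 + (1/12) * (h x) ^ 2)
    (T : ℝ × ℝ → ℝ × ℝ)
    (hT : ∀ p : ℝ × ℝ, T p = (p.1 + h p.1 + p.2, h p.1 + p.2)) :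
    ∃ C δ : ℝ, 0 < C ∧ 0 < δ ∧ ∀ x y : ℝ, |x| ≤ δ → |y| ≤ δ →
      |H (T (x, y)).1 (T (x, y)).2 - H x y| ≤ C * (x ^ 8 + y ^ 4) := by
  have hsm : ContDiff ℝ ((⊤:ℕ∞):WithTop ℕ∞) h := hsmooth.of_le (by simp)
  have hdiff : Differentiable ℝ h := hsm.differentiable (by simp)
  have hdQ : ContDiff ℝ ((⊤:ℕ∞):WithTop ℕ∞) (deriv h) := (contDiff_infty_iff_deriv.mp hsm).2
  have hd2 : ContDiff ℝ ((⊤:ℕ∞):WithTop ℕ∞) (iteratedDeriv 2 h) := by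
    have e : iteratedDeriv 2 h = deriv (deriv h) := by
      rw [show (2:ℕ) = 1+1 from rfl, iteratedDeriv_succ, iteratedDeriv_one]
    rw [e]; exact (contDiff_infty_iff_deriv.mp hdQ).2
  -- basic values at 0
  have h0 : h 0 = 0 := by have := hodd 0; simp only [neg_zero] at this; linarith
  have hC₅ : 0 ≤ C₅ := by
    have h1 := hh 1 (by norm_num)
    simp only [one_pow, mul_one, abs_one] at h1
    linarith [abs_nonneg (h 1 - b)]
  have hcube : ∀ z : ℝ, |z| ≤ 1 → |h z| ≤ (b + C₅) * |z|^3 := by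
    intro z hz
    have e1 : |h z| ≤ |h z - b*z^3| + |b*z^3| := by
      calc |h z| = |(h z - b*z^3) + b*z^3| := by ring_nf
        _ ≤ |h z - b*z^3| + |b*z^3| := abs_add_le _ _
    have e2 : |b*z^3| = b * |z|^3 := by rw [abs_mul, abs_of_pos hb, abs_pow]
    have e3 : |z|^5 ≤ |z|^3 := pow_le_pow_of_le_one (abs_nonneg z) hz (by norm_num)
    have e4 := hh z hz
    nlinarith [abs_nonneg z]
  -- derivative values at 0
  have hd0 : deriv h 0 = 0 := by
    have hkey : Filter.Tendsto (slope h 0) (nhdsWithin 0 {(0:ℝ)}ᶜ) (nhds 0) := by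
      apply squeeze_zero_norm' (a := fun z => (b + C₅) * z^2)
      · filter_upwards [eventually_nhdsWithin_of_eventually_nhds
          (Metric.eventually_nhds_iff.mpr ⟨1, by norm_num, fun {z} hz => le_of_lt hz⟩),
          self_mem_nhdsWithin] with z hz1 hz2
        have hzne : z ≠ 0 := hz2
        have hz1' : |z| ≤ 1 := by simpa [Real.dist_eq] using hz1
        have hslope : slope h 0 z = h z / z := by
          rw [slope_def_field]; rw [h0]; ring_nf
        rw [hslope, Real.norm_eq_abs, abs_div]
        rw [div_le_iff₀ (abs_pos.mpr hzne)]
        calc |h z| ≤ (b+C₅)*|z|^3 := hcube z hz1'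
          _ = ((b+C₅) * z^2) * |z| := by
              rw [show |z|^3 = |z|^2 * |z| from by ring, sq_abs]; ring
      · have : Filter.Tendsto (fun z : ℝ => (b+C₅)*z^2) (nhds 0) (nhds ((b+C₅)*0^2)) :=
          (continuous_const.mul (continuous_pow 2)).tendsto 0
        simp only [ne_eq, OfNat.ofNat_ne_zero, not_false_eq_true, zero_pow, mul_zero] at this
        exact tendsto_nhdsWithin_of_tendsto_nhds this
    exact tendsto_nhds_unique (hasDerivAt_iff_tendsto_slope.mp (hdiff 0).hasDerivAt) hkey
  have heven : ∀ t, deriv h (-t) = deriv h t := by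
    intro t
    have e : (fun t => h (-t)) = (fun t => -h t) := funext hodd
    have e2 := deriv_comp_neg h t
    rw [e, deriv.fun_neg] at e2
    linarith
  have hdd0 : deriv (deriv h) 0 = 0 := by
    have e : (fun t => deriv h (-t)) = deriv h := funext heven
    have e2 := deriv_comp_neg (deriv h) 0
    rw [e, neg_zero] at e2
    linarith
  have h2d0 : iteratedDeriv 2 h 0 = 0 := by
    rw [show (2:ℕ) = 1+1 from rfl, iteratedDeriv_succ, iteratedDeriv_one]; exact hdd0
  -- G facts
  have hcont : Continuous h := hsm.continuous
  have hGd : ∀ t, HasDerivAt G (h t) t := by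
    intro t
    have hfun : G = fun u => ∫ z in (0:ℝ)..u, h z := funext hG
    rw [hfun]
    exact intervalIntegral.integral_hasDerivAt_right (hcont.intervalIntegrable _ _)
      (hcont.stronglyMeasurableAtFilter _ _) hcont.continuousAt
  have derivG : deriv G = h := funext fun t => (hGd t).deriv
  have hGc : ContDiff ℝ ((⊤:ℕ∞):WithTop ℕ∞) G :=
    contDiff_infty_iff_deriv.mpr ⟨fun t => (hGd t).differentiableAt, derivG ▸ hsm⟩
  -- iterated derivative identities
  have d1 : iteratedDeriv 1 (deriv h) = iteratedDeriv 2 h :=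
    (iteratedDeriv_succ' (n := 1) (f := h)).symm
  have d2 : iteratedDeriv 2 (deriv h) = iteratedDeriv 3 h :=
    (iteratedDeriv_succ' (n := 2) (f := h)).symm
  have d3 : iteratedDeriv 3 (deriv h) = iteratedDeriv 4 h :=
    (iteratedDeriv_succ' (n := 3) (f := h)).symm
  have g1 : iteratedDeriv 1 G = h := by rw [iteratedDeriv_one, derivG]
  have g2 : iteratedDeriv 2 G = deriv h := by
    rw [iteratedDeriv_succ' (n := 1) (f := G), derivG, iteratedDeriv_one]
  have g3 : iteratedDeriv 3 G = iteratedDeriv 2 h := by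
    rw [iteratedDeriv_succ' (n := 2) (f := G), derivG]
  have g4 : iteratedDeriv 4 G = iteratedDeriv 3 h := by
    rw [iteratedDeriv_succ' (n := 3) (f := G), derivG]
  have g5 : iteratedDeriv 5 G = iteratedDeriv 4 h := by
    rw [iteratedDeriv_succ' (n := 4) (f := G), derivG]
  -- global bounds on a compact interval
  obtain ⟨K, hK1, hKb, hKh, hK3, hK4⟩ : ∃ K : ℝ, 1 ≤ K ∧ b + C₅ ≤ K ∧
      (∀ t : ℝ, |t| ≤ 3 → |h t| ≤ K) ∧ (∀ t : ℝ, |t| ≤ 3 → |iteratedDeriv 3 h t| ≤ K) ∧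
      (∀ t : ℝ, |t| ≤ 3 → |iteratedDeriv 4 h t| ≤ K) := by
    obtain ⟨K₀, hK₀⟩ := (isCompact_Icc (a := (-3:ℝ)) (b := 3)).exists_bound_of_continuousOn
      hcont.continuousOn
    obtain ⟨K₃, hK₃⟩ := (isCompact_Icc (a := (-3:ℝ)) (b := 3)).exists_bound_of_continuousOn
      (hsm.continuous_iteratedDeriv 3 (by exact WithTop.coe_le_coe.mpr le_top)).continuousOn
    obtain ⟨K₄, hK₄⟩ := (isCompact_Icc (a := (-3:ℝ)) (b := 3)).exists_bound_of_continuousOn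
      (hsm.continuous_iteratedDeriv 4 (by exact WithTop.coe_le_coe.mpr le_top)).continuousOn
    refine ⟨max (max 1 (b+C₅)) (max K₀ (max K₃ K₄)), ?_, ?_, ?_, ?_, ?_⟩
    · exact le_max_of_le_left (le_max_left _ _)
    · exact le_max_of_le_left (le_max_right _ _)
    · intro t ht
      have : t ∈ Set.Icc (-3:ℝ) 3 := by rw [Set.mem_Icc]; constructor <;> [linarith [abs_le.mp ht|>.1]; exact (abs_le.mp ht).2]
      exact le_trans (hK₀ t this) (le_max_of_le_right (le_max_left _ _))
    · intro t ht
      have : t ∈ Set.Icc (-3:ℝ) 3 := by rw [Set.mem_Icc]; exact abs_le.mp ht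
      exact le_trans (hK₃ t this) (le_max_of_le_right (le_max_of_le_right (le_max_left _ _)))
    · intro t ht
      have : t ∈ Set.Icc (-3:ℝ) 3 := by rw [Set.mem_Icc]; exact abs_le.mp ht
      exact le_trans (hK₄ t this) (le_max_of_le_right (le_max_of_le_right (le_max_right _ _)))
  have hK0 : (0:ℝ) < K := lt_of_lt_of_le one_pos hK1
  refine ⟨100*K^6, 1/(2*K), by positivity, by positivity, ?_⟩
  intro x y hx hy
  have hδ : 1/(2*K) ≤ 1/2 := by
    rw [div_le_div_iff₀ (by positivity) (by norm_num)]
    linarith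
  have hx2 : |x| ≤ 1/2 := le_trans hx hδ
  have hy2 : |y| ≤ 1/2 := le_trans hy hδ
  have hx1 : |x| ≤ 1 := by linarith
  have hy1 : |y| ≤ 1 := by linarith
  have hxK : K * |x| ≤ 1/2 := by
    calc K * |x| ≤ K * (1/(2*K)) := by gcongr
      _ = 1/2 := by
        rw [mul_one_div, div_eq_iff (show (2*K) ≠ 0 by positivity)]
        ring
  set a := h x with ha_def
  set p := deriv h x with hp_def
  set q := iteratedDeriv 2 h x with hq_def
  set r := iteratedDeriv 3 h x with hr_def
  set s := a + y with hs_def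
  have hT1 : (T (x,y)).1 = x + s := by
    rw [hT]
    show x + h x + y = x + s
    rw [hs_def, ha_def]
    ring
  have hT2 : (T (x,y)).2 = s := by
    rw [hT]
  rw [hT1, hT2]
  clear_value a p q r s
  -- size facts
  have hsqx : |x|^2 = x^2 := sq_abs x
  have ha_abs : |a| ≤ K * |x|^3 := by
    have h1 := hcube x hx1
    have h2 : (b + C₅) * |x|^3 ≤ K * |x|^3 :=
      mul_le_mul_of_nonneg_right hKb (by positivity)
    rw [ha_def]
    exact h1.trans h2
  have hx3le : |x|^3 ≤ |x| := by
    calc |x|^3 ≤ |x|^1 := pow_le_pow_of_le_one (abs_nonneg x) hx1 (by norm_num)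
      _ = |x| := pow_one _
  have hx3le2 : |x|^3 ≤ x^2 := by
    calc |x|^3 ≤ |x|^2 := pow_le_pow_of_le_one (abs_nonneg x) hx1 (by norm_num)
      _ = x^2 := sq_abs x
  have hs1 : |s| ≤ 1 := by
    rw [hs_def]
    have h1 : |a + y| ≤ |a| + |y| := abs_add_le _ _
    have h3 : K * |x|^3 ≤ K * |x| := mul_le_mul_of_nonneg_left hx3le hK0.le
    linarith
  set N := |y| + K * x^2 with hN_def
  clear_value N
  have hN0 : 0 ≤ N := by rw [hN_def]; positivity
  have hsN : |s| ≤ N := by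
    rw [hs_def, hN_def]
    have h1 : |a + y| ≤ |a| + |y| := abs_add_le _ _
    have h3 : K * |x|^3 ≤ K * x^2 := mul_le_mul_of_nonneg_left hx3le2 hK0.le
    linarith
  have hKx2N : K * x^2 ≤ N := by rw [hN_def]; linarith [abs_nonneg y]
  have hN1 : N ≤ 1 := by
    rw [hN_def]
    have e : K * x^2 ≤ 1/2 := by
      calc K * x^2 = (K*|x|)*|x| := by rw [← hsqx]; ring
        _ ≤ (1/2)*1 := mul_le_mul hxK hx1 (abs_nonneg x) (by norm_num)
        _ = 1/2 := by norm_num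
    linarith
  -- Taylor remainder bounds
  have huIcc3 : ∀ σ ∈ Set.uIcc (0:ℝ) s, |x + σ| ≤ 3 := by
    intro σ hσ
    have e1 := abs_le_of_mem_uIcc hσ
    have e2 := abs_add_le x σ
    linarith
  have hD0 : |h (x+s) - (a + p*s + q*s^2/2 + r*s^3/6)| ≤ K * |s|^4 := by
    have hhyp : ∀ σ ∈ Set.uIcc (0:ℝ) s, |iteratedDeriv (3+1) h (x+σ)| ≤ K :=
      fun σ hσ => hK4 _ (huIcc3 σ hσ)
    have ht := taylor_est 3 h hsm K x s hhyp
    have hsum : ∑ k ∈ Finset.range (3+1), iteratedDeriv k h x * s^k / (k.factorial)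
        = a + p*s + q*s^2/2 + r*s^3/6 := by
      rw [Finset.sum_range_succ, Finset.sum_range_succ, Finset.sum_range_succ,
        Finset.sum_range_one]
      rw [iteratedDeriv_zero, iteratedDeriv_one, ← ha_def, ← hp_def, ← hq_def, ← hr_def]
      norm_num [Nat.factorial]
    rw [hsum] at ht
    exact ht
  have hD1 : |deriv h (x+s) - (p + q*s + r*s^2/2)| ≤ K * |s|^3 := by
    have hhyp : ∀ σ ∈ Set.uIcc (0:ℝ) s, |iteratedDeriv (2+1) (deriv h) (x+σ)| ≤ K := by
      intro σ hσ
      have e : iteratedDeriv (2+1) (deriv h) = iteratedDeriv 4 h := d3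
      rw [e]
      exact hK4 _ (huIcc3 σ hσ)
    have ht := taylor_est 2 (deriv h) hdQ K x s hhyp
    have hsum : ∑ k ∈ Finset.range (2+1), iteratedDeriv k (deriv h) x * s^k / (k.factorial)
        = p + q*s + r*s^2/2 := by
      rw [Finset.sum_range_succ, Finset.sum_range_succ, Finset.sum_range_one]
      rw [iteratedDeriv_zero, d1, d2, ← hp_def, ← hq_def, ← hr_def]
      norm_num [Nat.factorial]
    rw [hsum] at ht
    exact ht
  have hD2 : |G (x+s) - (G x + a*s + p*s^2/2 + q*s^3/6 + r*s^4/24)| ≤ K * |s|^5 := by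
    have hhyp : ∀ σ ∈ Set.uIcc (0:ℝ) s, |iteratedDeriv (4+1) G (x+σ)| ≤ K := by
      intro σ hσ
      have e : iteratedDeriv (4+1) G = iteratedDeriv 4 h := g5
      rw [e]
      exact hK4 _ (huIcc3 σ hσ)
    have ht := taylor_est 4 G hGc K x s hhyp
    have hsum : ∑ k ∈ Finset.range (4+1), iteratedDeriv k G x * s^k / (k.factorial)
        = G x + a*s + p*s^2/2 + q*s^3/6 + r*s^4/24 := by
      rw [Finset.sum_range_succ, Finset.sum_range_succ, Finset.sum_range_succ,
        Finset.sum_range_succ, Finset.sum_range_one]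
      rw [iteratedDeriv_zero, g1, g2, g3, g4, ← ha_def, ← hp_def, ← hq_def, ← hr_def]
      norm_num [Nat.factorial]
    rw [hsum] at ht
    exact ht
  -- coefficient bounds
  have hr_abs : |r| ≤ K := by rw [hr_def]; exact hK3 x (by linarith)
  have hp_abs : |p| ≤ K * x^2 := by
    have hhyp : ∀ σ ∈ Set.uIcc (0:ℝ) x, |iteratedDeriv (1+1) (deriv h) (0+σ)| ≤ K := by
      intro σ hσ
      have e : iteratedDeriv (1+1) (deriv h) = iteratedDeriv 3 h := d2
      rw [e, zero_add]
      exact hK3 _ (le_trans (abs_le_of_mem_uIcc hσ) (by linarith))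
    have ht := taylor_est 1 (deriv h) hdQ K 0 x hhyp
    have hsum : ∑ k ∈ Finset.range (1+1), iteratedDeriv k (deriv h) 0 * x^k / (k.factorial)
        = 0 := by
      rw [Finset.sum_range_succ, Finset.sum_range_one, iteratedDeriv_zero]
      have e1 : iteratedDeriv 1 (deriv h) 0 = 0 := by rw [d1]; exact h2d0
      rw [hd0, e1]
      simp
    rw [hsum] at ht
    simp only [zero_add, sub_zero] at ht
    rw [hp_def]
    calc |deriv h x| ≤ K * |x|^2 := ht
      _ = K * x^2 := by rw [hsqx]
  have hq_abs : |q| ≤ K * |x| := by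
    have e3 : iteratedDeriv 1 (iteratedDeriv 2 h) = iteratedDeriv 3 h := by
      rw [iteratedDeriv_one]
      exact (iteratedDeriv_succ (n := 2) (f := h)).symm
    have hhyp : ∀ σ ∈ Set.uIcc (0:ℝ) x, |iteratedDeriv (0+1) (iteratedDeriv 2 h) (0+σ)| ≤ K := by
      intro σ hσ
      have e : iteratedDeriv (0+1) (iteratedDeriv 2 h) = iteratedDeriv 3 h := e3
      rw [e, zero_add]
      exact hK3 _ (le_trans (abs_le_of_mem_uIcc hσ) (by linarith))
    have ht := taylor_est 0 (iteratedDeriv 2 h) hd2 K 0 x hhyp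
    have hsum : ∑ k ∈ Finset.range (0+1), iteratedDeriv k (iteratedDeriv 2 h) 0 * x^k / (k.factorial)
        = 0 := by
      rw [Finset.sum_range_one, iteratedDeriv_zero]
      rw [h2d0]
      simp
    rw [hsum] at ht
    simp only [zero_add, sub_zero, pow_one] at ht
    rw [hq_def]
    exact ht
  have hA_abs : |h (x+s)| ≤ K := by
    apply hKh
    have := abs_add_le x s
    linarith
  -- main algebraic decomposition
  have goal_eq : H (x+s) s - H x y =
      ((p*s + q*s^2/2 + r*s^3/6)^2/12 + a*q*s^2/12 + a*r*s^3/36 + p*a^2/12)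
      + (-(G (x+s) - (G x + a*s + p*s^2/2 + q*s^3/6 + r*s^4/24))
         + (h (x+s) - (a + p*s + q*s^2/2 + r*s^3/6))*s/2
         - (deriv h (x+s) - (p + q*s + r*s^2/2))*s^2/12
         + (h (x+s) - (a + p*s + q*s^2/2 + r*s^3/6))^2/12
         + (h (x+s) - (a + p*s + q*s^2/2 + r*s^3/6))*(a + p*s + q*s^2/2 + r*s^3/6)/6) := by
    rw [hH, hH, ← ha_def, ← hp_def, hs_def]
    ring
  rw [goal_eq]
  -- numeric bounds
  have hx2le1 : x^2 ≤ 1 := by nlinarith only [sq_abs x, hx1, abs_nonneg x]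
  have hsnn : (0:ℝ) ≤ |s| := abs_nonneg s
  have hs4N : |s|^4 ≤ N^4 := pow_le_pow_left₀ hsnn hsN 4
  have hs4le1 : |s|^4 ≤ 1 := pow_le_one₀ hsnn hs1
  have hy4 : |y|^4 = y^4 := by rw [← abs_pow]; exact abs_of_nonneg (by positivity)
  have hx8 : |x|^8 = x^8 := by rw [← abs_pow]; exact abs_of_nonneg (by positivity)
  have hN4 : N^4 ≤ 8*y^4 + 8*K^4*x^8 := by
    calc N^4 = (|y| + K*x^2)^4 := by rw [hN_def]
      _ ≤ 8*|y|^4 + 8*(K*x^2)^4 := quad_bound _ _ (abs_nonneg y) (by positivity)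
      _ = 8*y^4 + 8*K^4*x^8 := by rw [hy4]; ring
  -- bound on W
  have hW : |p*s + q*s^2/2 + r*s^3/6| ≤ 2*K*N^2 := by
    have hKN2 : (0:ℝ) ≤ K*N^2 := by positivity
    have t1 : |p*s| ≤ K*N^2 := by
      calc |p*s| = |p| * |s| := abs_mul _ _
        _ ≤ (K*x^2)*N := mul_le_mul hp_abs hsN hsnn (by positivity)
        _ ≤ N*N := mul_le_mul_of_nonneg_right hKx2N hN0
        _ ≤ K*N^2 := by
            linarith only [mul_nonneg (sub_nonneg.mpr hK1) (sq_nonneg N)]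
    have t2 : |q*s^2/2| ≤ K*N^2/2 := by
      have e : |q*s^2/2| = |q| * |s|^2/2 := by
        rw [abs_div, abs_mul, abs_pow]
        norm_num
      rw [e]
      have h2 : |q| * |s|^2 ≤ (K*|x|)*N^2 :=
        mul_le_mul hq_abs (pow_le_pow_left₀ hsnn hsN 2) (by positivity) (by positivity)
      have h3 : (K*|x|)*N^2 ≤ K*N^2 := by
        linarith only [mul_nonneg (mul_nonneg hK0.le (sq_nonneg N)) (sub_nonneg.mpr hx1)]
      linarith only [h2, h3]
    have t3 : |r*s^3/6| ≤ K*N^2/6 := by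
      have e : |r*s^3/6| = |r| * |s|^3/6 := by
        rw [abs_div, abs_mul, abs_pow]
        norm_num
      rw [e]
      have h2 : |r| * |s|^3 ≤ K*N^3 :=
        mul_le_mul hr_abs (pow_le_pow_left₀ hsnn hsN 3) (by positivity) hK0.le
      have h3 : K*N^3 ≤ K*N^2 := by
        linarith only [mul_nonneg (mul_nonneg hK0.le (sq_nonneg N)) (sub_nonneg.mpr hN1)]
      linarith only [h2, h3]
    calc |p*s + q*s^2/2 + r*s^3/6| ≤ |p*s| + |q*s^2/2| + |r*s^3/6| := abs_add_three _ _ _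
      _ ≤ 2*K*N^2 := by linarith only [t1, t2, t3, hKN2]
  have hc1 : |(p*s + q*s^2/2 + r*s^3/6)^2/12| ≤ K^2*N^4 := by
    have e : |(p*s + q*s^2/2 + r*s^3/6)^2/12| = |p*s + q*s^2/2 + r*s^3/6|^2/12 := by
      rw [abs_div, abs_pow]
      norm_num
    rw [e]
    have h2 : |p*s + q*s^2/2 + r*s^3/6|^2 ≤ (2*K*N^2)^2 :=
      pow_le_pow_left₀ (abs_nonneg _) hW 2
    have h3 : (2*K*N^2)^2 = 4*(K^2*N^4) := by ring
    have h4 : (0:ℝ) ≤ K^2*N^4 := by positivity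
    linarith only [h2, h3, h4]
  have hc2 : |a*q*s^2/12| ≤ N^4/12 := by
    have e : |a*q*s^2/12| = |a| * |q| * |s|^2/12 := by
      rw [abs_div, abs_mul, abs_mul, abs_pow]
      norm_num
    rw [e]
    have m1 : |a| * |q| ≤ (K*|x|^3)*(K*|x|) :=
      mul_le_mul ha_abs hq_abs (abs_nonneg q) (by positivity)
    have m2 : (K*|x|^3)*(K*|x|) = (K*x^2)^2 := by rw [← hsqx]; ring
    have m3 : (K*x^2)^2 ≤ N^2 := pow_le_pow_left₀ (by positivity) hKx2N 2
    have m3' : (K*|x|^3)*(K*|x|) ≤ N^2 := by rw [m2]; exact m3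
    have m4 : |s|^2 ≤ N^2 := pow_le_pow_left₀ hsnn hsN 2
    have m5 : |a| * |q| * |s|^2 ≤ N^2*N^2 :=
      mul_le_mul (m1.trans m3') m4 (by positivity) (by positivity)
    have m6 : N^2*N^2 = N^4 := by ring
    linarith only [m5, m6]
  have hc3 : |a*r*s^3/36| ≤ K*N^4/36 := by
    have e : |a*r*s^3/36| = |a| * |r| * |s|^3/36 := by
      rw [abs_div, abs_mul, abs_mul, abs_pow]
      norm_num
    rw [e]
    have m1 : |a| * |r| ≤ (K*|x|^3)*K :=
      mul_le_mul ha_abs hr_abs (abs_nonneg r) (by positivity)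
    have m2 : (K*|x|^3)*K ≤ K*(K*x^2) := by
      linarith only [mul_le_mul_of_nonneg_left hx3le2 (mul_nonneg hK0.le hK0.le)]
    have m3 : K*(K*x^2) ≤ K*N := mul_le_mul_of_nonneg_left hKx2N hK0.le
    have m4 : |s|^3 ≤ N^3 := pow_le_pow_left₀ hsnn hsN 3
    have m5 : |a| * |r| * |s|^3 ≤ (K*N)*N^3 :=
      mul_le_mul ((m1.trans m2).trans m3) m4 (by positivity) (by positivity)
    have m6 : (K*N)*N^3 = K*N^4 := by ring
    linarith only [m5, m6]
  have hc4 : |p*a^2/12| ≤ K^3*x^8/12 := by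
    have e : |p*a^2/12| = |p| * |a|^2/12 := by
      rw [abs_div, abs_mul, abs_pow]
      norm_num
    rw [e]
    have m1 : |a|^2 ≤ (K*|x|^3)^2 := pow_le_pow_left₀ (abs_nonneg a) ha_abs 2
    have m2 : |p| * |a|^2 ≤ (K*x^2)*(K*|x|^3)^2 :=
      mul_le_mul hp_abs m1 (by positivity) (by positivity)
    have m3 : (K*x^2)*(K*|x|^3)^2 = K^3*|x|^8 := by rw [← hsqx]; ring
    rw [m3, hx8] at m2
    linarith only [m2]
  -- bounds on the remainder part
  have hTh0 : |a + p*s + q*s^2/2 + r*s^3/6| ≤ 3*K := by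
    have t0 : |a| ≤ K := by
      have e : K*|x|^3 ≤ K*1 :=
        mul_le_mul_of_nonneg_left (pow_le_one₀ (abs_nonneg x) hx1) hK0.le
      linarith only [ha_abs, e]
    have t1 : |p*s| ≤ K := by
      have e : |p*s| = |p| * |s| := abs_mul _ _
      have e2 : |p| * |s| ≤ (K*x^2)*1 := mul_le_mul hp_abs hs1 hsnn (by positivity)
      have e3 : K*x^2 ≤ K*1 := mul_le_mul_of_nonneg_left hx2le1 hK0.le
      rw [e]
      linarith only [e2, e3]
    have t2 : |q*s^2/2| ≤ K/2 := by
      have e : |q*s^2/2| = |q| * |s|^2/2 := by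
        rw [abs_div, abs_mul, abs_pow]; norm_num
      rw [e]
      have e2 : |q| * |s|^2 ≤ (K*|x|)*1 :=
        mul_le_mul hq_abs (pow_le_one₀ hsnn hs1) (by positivity) (by positivity)
      have e3 : K*|x| ≤ K*1 := mul_le_mul_of_nonneg_left hx1 hK0.le
      linarith only [e2, e3]
    have t3 : |r*s^3/6| ≤ K/6 := by
      have e : |r*s^3/6| = |r| * |s|^3/6 := by
        rw [abs_div, abs_mul, abs_pow]; norm_num
      rw [e]
      have e2 : |r| * |s|^3 ≤ K*1 :=
        mul_le_mul hr_abs (pow_le_one₀ hsnn hs1) (by positivity) hK0.le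
      linarith only [e2]
    calc |a + p*s + q*s^2/2 + r*s^3/6|
        ≤ |a + p*s| + |q*s^2/2| + |r*s^3/6| := abs_add_three _ _ _
      _ ≤ (|a| + |p*s|) + |q*s^2/2| + |r*s^3/6| := by
          linarith only [abs_add_le a (p*s)]
      _ ≤ 3*K := by linarith only [t0, t1, t2, t3, hK0.le]
  have hEP : |(-(G (x+s) - (G x + a*s + p*s^2/2 + q*s^3/6 + r*s^4/24))
         + (h (x+s) - (a + p*s + q*s^2/2 + r*s^3/6))*s/2
         - (deriv h (x+s) - (p + q*s + r*s^2/2))*s^2/12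
         + (h (x+s) - (a + p*s + q*s^2/2 + r*s^3/6))^2/12
         + (h (x+s) - (a + p*s + q*s^2/2 + r*s^3/6))*(a + p*s + q*s^2/2 + r*s^3/6)/6)|
      ≤ 3*K^2*N^4 := by
    set D0 := h (x+s) - (a + p*s + q*s^2/2 + r*s^3/6) with hD0_def
    set D1 := deriv h (x+s) - (p + q*s + r*s^2/2) with hD1_def
    set D2 := G (x+s) - (G x + a*s + p*s^2/2 + q*s^3/6 + r*s^4/24) with hD2_def
    set Th := a + p*s + q*s^2/2 + r*s^3/6 with hTh_def
    clear_value D0 D1 D2 Th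
    have b0 : |D0| ≤ K*|s|^4 := hD0
    have b1 : |D1| ≤ K*|s|^3 := hD1
    have b2 : |D2| ≤ K*|s|^5 := hD2
    have bT : |Th| ≤ 3*K := hTh0
    have step1 : |(-D2 + D0*s/2 - D1*s^2/12 + D0^2/12 + D0*Th/6)|
        ≤ |D2| + |D0| * |s|/2 + |D1| * |s|^2/12 + |D0|^2/12 + |D0| * |Th|/6 := by
      have u1 : |(-D2 + D0*s/2 - D1*s^2/12 + D0^2/12 + D0*Th/6)|
          ≤ |(-D2 + D0*s/2 - D1*s^2/12 + D0^2/12)| + |D0*Th/6| := abs_add_le _ _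
      have u2 : |(-D2 + D0*s/2 - D1*s^2/12 + D0^2/12)|
          ≤ |(-D2 + D0*s/2 - D1*s^2/12)| + |D0^2/12| := abs_add_le _ _
      have u3 : |(-D2 + D0*s/2 - D1*s^2/12)|
          ≤ |(-D2 + D0*s/2)| + |D1*s^2/12| := by
        rw [sub_eq_add_neg]
        calc |(-D2 + D0*s/2) + -(D1*s^2/12)|
            ≤ |(-D2 + D0*s/2)| + |-(D1*s^2/12)| := abs_add_le _ _
          _ = |(-D2 + D0*s/2)| + |D1*s^2/12| := by rw [abs_neg]
      have u4 : |(-D2 + D0*s/2)| ≤ |D2| + |D0*s/2| := by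
        calc |(-D2 + D0*s/2)| ≤ |(-D2)| + |D0*s/2| := abs_add_le _ _
          _ = |D2| + |D0*s/2| := by rw [abs_neg]
      have v1 : |D0*s/2| = |D0| * |s|/2 := by rw [abs_div, abs_mul]; norm_num
      have v2 : |D1*s^2/12| = |D1| * |s|^2/12 := by rw [abs_div, abs_mul, abs_pow]; norm_num
      have v3 : |D0^2/12| = |D0|^2/12 := by rw [abs_div, abs_pow]; norm_num
      have v4 : |D0*Th/6| = |D0| * |Th|/6 := by rw [abs_div, abs_mul]; norm_num
      rw [v1] at u4
      rw [v2] at u3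
      rw [v3] at u2
      rw [v4] at u1
      linarith only [u1, u2, u3, u4]
    have w0 : |D2| ≤ K*|s|^4 := by
      have e2 : |s|^5 ≤ |s|^4 := pow_le_pow_of_le_one hsnn hs1 (by norm_num)
      have e3 : K*|s|^5 ≤ K*|s|^4 := mul_le_mul_of_nonneg_left e2 hK0.le
      linarith only [b2, e3]
    have w1 : |D0| * |s| ≤ K*|s|^4 := by
      have e : |D0| * |s| ≤ (K*|s|^4)*1 := mul_le_mul b0 hs1 hsnn (by positivity)
      linarith only [e]
    have w2 : |D1| * |s|^2 ≤ K*|s|^4 := by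
      have e2 : |s|^2 ≤ |s| := by
        calc |s|^2 ≤ |s|^1 := pow_le_pow_of_le_one hsnn hs1 (by norm_num)
          _ = |s| := pow_one _
      have e3 : |D1| * |s|^2 ≤ (K*|s|^3)*|s|^2 := mul_le_mul_of_nonneg_right b1 (by positivity)
      have e4 : (K*|s|^3)*|s|^2 ≤ (K*|s|^3)*|s| := mul_le_mul_of_nonneg_left e2 (by positivity)
      have e5 : (K*|s|^3)*|s| = K*|s|^4 := by ring
      linarith only [e3, e4, e5]
    have w3 : |D0|^2 ≤ K^2*|s|^4 := by
      have w3a : |D0|^2 ≤ (K*|s|^4)^2 := pow_le_pow_left₀ (abs_nonneg _) b0 2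
      have w3b : (K*|s|^4)^2 = K^2*|s|^4*|s|^4 := by ring
      linarith only [w3a, w3b, mul_nonneg (mul_nonneg (sq_nonneg K) (pow_nonneg hsnn 4))
        (sub_nonneg.mpr hs4le1)]
    have w4 : |D0| * |Th| ≤ 3*(K^2*|s|^4) := by
      have e : |D0| * |Th| ≤ (K*|s|^4)*(3*K) := mul_le_mul b0 bT (abs_nonneg _) (by positivity)
      have e2 : (K*|s|^4)*(3*K) = 3*(K^2*|s|^4) := by ring
      linarith only [e, e2]
    have hKle : K*|s|^4 ≤ K^2*|s|^4 := by
      linarith only [mul_nonneg (sub_nonneg.mpr hK1) (mul_nonneg hK0.le (pow_nonneg hsnn 4))]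
    have hfin : |D2| + |D0| * |s|/2 + |D1| * |s|^2/12 + |D0|^2/12 + |D0| * |Th|/6
        ≤ 3*(K^2*|s|^4) := by
      linarith only [w0, w1, w2, w3, w4, hKle,
        mul_nonneg (sq_nonneg K) (pow_nonneg hsnn 4)]
    have hlast : 3*(K^2*|s|^4) ≤ 3*K^2*N^4 := by
      linarith only [mul_le_mul_of_nonneg_left hs4N (show (0:ℝ) ≤ K^2 by positivity)]
    linarith only [step1, hfin, hlast]
  -- candidate bound
  have hcand : |((p*s + q*s^2/2 + r*s^3/6)^2/12 + a*q*s^2/12 + a*r*s^3/36 + p*a^2/12)|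
      ≤ 2*K^2*N^4 + K^3*x^8 := by
    have u1 : |((p*s + q*s^2/2 + r*s^3/6)^2/12 + a*q*s^2/12 + a*r*s^3/36 + p*a^2/12)|
        ≤ |((p*s + q*s^2/2 + r*s^3/6)^2/12 + a*q*s^2/12)| + |a*r*s^3/36| + |p*a^2/12| :=
      abs_add_three _ _ _
    have u2 : |((p*s + q*s^2/2 + r*s^3/6)^2/12 + a*q*s^2/12)|
        ≤ |(p*s + q*s^2/2 + r*s^3/6)^2/12| + |a*q*s^2/12| := abs_add_le _ _
    have hN4nn : (0:ℝ) ≤ N^4 := by positivity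
    have hK2ge1 : (1:ℝ) ≤ K^2 := one_le_pow₀ hK1
    have e1 : N^4/12 + K*N^4/36 ≤ K^2*N^4 := by
      linarith only [mul_nonneg (mul_nonneg hK0.le (sub_nonneg.mpr hK1)) hN4nn,
        mul_nonneg (sub_nonneg.mpr hK2ge1) hN4nn,
        mul_nonneg (sq_nonneg K) hN4nn]
    have e2 : (0:ℝ) ≤ K^3*x^8 := by positivity
    linarith only [u1, u2, hc1, hc2, hc3, hc4, e1, e2]
  calc |((p*s + q*s^2/2 + r*s^3/6)^2/12 + a*q*s^2/12 + a*r*s^3/36 + p*a^2/12)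
      + (-(G (x+s) - (G x + a*s + p*s^2/2 + q*s^3/6 + r*s^4/24))
         + (h (x+s) - (a + p*s + q*s^2/2 + r*s^3/6))*s/2
         - (deriv h (x+s) - (p + q*s + r*s^2/2))*s^2/12
         + (h (x+s) - (a + p*s + q*s^2/2 + r*s^3/6))^2/12
         + (h (x+s) - (a + p*s + q*s^2/2 + r*s^3/6))*(a + p*s + q*s^2/2 + r*s^3/6)/6)|
      ≤ |((p*s + q*s^2/2 + r*s^3/6)^2/12 + a*q*s^2/12 + a*r*s^3/36 + p*a^2/12)|
      + |(-(G (x+s) - (G x + a*s + p*s^2/2 + q*s^3/6 + r*s^4/24))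
         + (h (x+s) - (a + p*s + q*s^2/2 + r*s^3/6))*s/2
         - (deriv h (x+s) - (p + q*s + r*s^2/2))*s^2/12
         + (h (x+s) - (a + p*s + q*s^2/2 + r*s^3/6))^2/12
         + (h (x+s) - (a + p*s + q*s^2/2 + r*s^3/6))*(a + p*s + q*s^2/2 + r*s^3/6)/6)| :=
      abs_add_le _ _
    _ ≤ (2*K^2*N^4 + K^3*x^8) + 3*K^2*N^4 := add_le_add hcand hEP
    _ ≤ 100*K^6*(x^8 + y^4) := by
      have hK2_6 : K^2 ≤ K^6 := pow_le_pow_right₀ hK1 (by norm_num)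
      have hK3_6 : K^3 ≤ K^6 := pow_le_pow_right₀ hK1 (by norm_num)
      have s1 : 5*(K^2*N^4) ≤ 5*(K^2*(8*y^4+8*K^4*x^8)) := by
        have e := mul_le_mul_of_nonneg_left hN4 (show (0:ℝ) ≤ K^2 by positivity)
        linarith only [e]
      have s2 : 5*(K^2*(8*y^4+8*K^4*x^8)) = 40*(K^2*y^4) + 40*(K^6*x^8) := by ring
      have s3 : 40*(K^2*y^4) ≤ 40*(K^6*y^4) := by
        have e := mul_le_mul_of_nonneg_right hK2_6 (show (0:ℝ) ≤ y^4 by positivity)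
        linarith only [e]
      have s4 : K^3*x^8 ≤ K^6*x^8 :=
        mul_le_mul_of_nonneg_right hK3_6 (by positivity)
      have s5 : (0:ℝ) ≤ K^6*x^8 := by positivity
      have s6 : (0:ℝ) ≤ K^6*y^4 := by positivity
      have s7 : 100*K^6*(x^8+y^4) = 100*(K^6*x^8) + 100*(K^6*y^4) := by ring
      linarith only [s1, s2, s3, s4, s5, s6, s7]
end

section
/- The stable manifold of the fixed point 0, written as a graph y = γ_s(x), satisfies γ_s(x) = -A⁻¹x² + O(x³) as x → 0⁺, where A = √(2/b). -/
private lemma tele_step (u : ℝ) (hu : 2 ≤ u) :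
    (u^4)⁻¹ ≤ (3*(u-1)^3)⁻¹ - (3*u^3)⁻¹ := by
  have h0 : (0:ℝ) < u := by linarith
  have h1 : (0:ℝ) < u - 1 := by linarith
  have h2 : (0:ℝ) < u^4 := by positivity
  have h3 : (0:ℝ) < 3*(u-1)^3 := by positivity
  have h4 : (0:ℝ) < 3*u^3 := by positivity
  have key2 : 0 ≤ u^3*(6*u^2 - 8*u + 3) := by nlinarith
  rw [inv_sub_inv h3.ne' h4.ne', inv_eq_one_div, div_le_div_iff₀ h2 (by positivity)]
  nlinarith [key2]

private lemma tele_aux (c : ℝ) (hc : 2 ≤ c) (n : ℕ) :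
    ∑ k ∈ Finset.range n, ((((k:ℝ)+c)^4)⁻¹) ≤ (3*(c-1)^3)⁻¹ := by
  have hstrong : ∀ m : ℕ,
      ∑ k ∈ Finset.range m, ((((k:ℝ)+c)^4)⁻¹)
        ≤ (3*(c-1)^3)⁻¹ - (3*((m:ℝ)+c-1)^3)⁻¹ := by
    intro m
    induction m with
    | zero => simp
    | succ m ih =>
      rw [Finset.sum_range_succ]
      have hu : (2:ℝ) ≤ (m:ℝ) + c := by
        have : (0:ℝ) ≤ (m:ℝ) := Nat.cast_nonneg m
        linarith
      have hstep := tele_step ((m:ℝ)+c) hu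
      have hcast : ((m+1:ℕ):ℝ) + c - 1 = (m:ℝ) + c := by push_cast; ring
      rw [hcast]
      linarith
  have hm := hstrong n
  have hpos : (0:ℝ) ≤ (3*((n:ℝ)+c-1)^3)⁻¹ := by
    have h1 : (0:ℝ) < (n:ℝ)+c-1 := by
      have : (0:ℝ) ≤ (n:ℝ) := Nat.cast_nonneg n
      linarith
    positivity
  linarith

set_option maxHeartbeats 4000000 in
/-- The stable manifold of the fixed point `0`, written as the graph `y = γ_s(x)` for
`x ≥ 0` small, satisfies `γ_s(x) = -A⁻¹x² + O(x³)` as `x → 0⁺`, where `A = √(2/b)`.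
The hypotheses encode that the graph of `γ_s` is invariant and that along it the orbit
satisfies `xₙ = A(n + c)⁻¹ + O((n+c)^{-3/2})` with `c = A/x₀`. -/
theorem stable_manifold_asymptotics
    (h : ℝ → ℝ) (hsmooth : ContDiff ℝ (⊤ : ℕ∞) h) (hodd : ∀ x, h (-x) = -h x)
    (b : ℝ) (hb : 0 < b)
    (C₅ : ℝ) (hh : ∀ x : ℝ, |x| ≤ 1 → |h x - b * x ^ 3| ≤ C₅ * |x| ^ 5)
    (T : ℝ × ℝ → ℝ × ℝ)
    (hT : ∀ p : ℝ × ℝ, T p = (p.1 + h p.1 + p.2, h p.1 + p.2))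
    (A : ℝ) (hA : A = Real.sqrt (2 / b))
    (γs : ℝ → ℝ) (K : NNReal) (hLip : LipschitzOnWith K γs (Set.Icc 0 1))
    (δ₀ Cb : ℝ) (hδ₀ : 0 < δ₀) (hCb : 0 < Cb)
    (horbit : ∀ x ∈ Set.Ioc (0:ℝ) δ₀, ∀ n : ℕ,
      (T^[n] (x, γs x)).2 = γs ((T^[n] (x, γs x)).1) ∧
      |(T^[n] (x, γs x)).1 - A / ((n : ℝ) + A / x)| ≤
        Cb * ((n : ℝ) + A / x) ^ (-(3:ℝ)/2)) :
    ∃ C δ : ℝ, 0 < C ∧ 0 < δ ∧ ∀ x ∈ Set.Ioc (0:ℝ) δ,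
      |γs x + A⁻¹ * x ^ 2| ≤ C * x ^ 3 := by
  have hA0 : 0 < A := by
    rw [hA]; exact Real.sqrt_pos.mpr (by positivity)
  have hA2 : A ^ 2 = 2 / b := by
    rw [hA]; exact Real.sq_sqrt (by positivity)
  have hbA : b = 2 / A ^ 2 := by
    field_simp [hb.ne'] at hA2 ⊢
    linarith
  have hC₅ : 0 ≤ C₅ := by
    have h1 := hh (1/2) (by rw [show |(1/2:ℝ)| = 1/2 by norm_num]; norm_num)
    have h2 : (0:ℝ) ≤ |h (1/2) - b * (1/2)^3| := abs_nonneg _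
    have h3 : |(1/2 : ℝ)| = 1/2 := by norm_num
    rw [h3] at h1
    nlinarith
  obtain ⟨CR, hCRdef⟩ : ∃ CR : ℝ, CR = 6*C₅ + 11/A^3 + (b+C₅)/A := ⟨_, rfl⟩
  have hCR0 : 0 < CR := by
    rw [hCRdef]
    have h1 : (0:ℝ) < 11/A^3 := div_pos (by norm_num) (pow_pos hA0 3)
    have h2 : (0:ℝ) ≤ (b+C₅)/A := div_nonneg (by linarith) hA0.le
    nlinarith
  obtain ⟨C, hCdef⟩ : ∃ C : ℝ, C = (128/3)*CR*A := ⟨_, rfl⟩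
  have hC0 : 0 < C := by
    rw [hCdef]
    exact mul_pos (mul_pos (by norm_num) hCR0) hA0
  obtain ⟨δ, hδdef⟩ : ∃ δ : ℝ, δ = min δ₀ (min (1/2) (min (A/2) (A^3/(4*Cb^2)))) := ⟨_, rfl⟩
  have hδpos : 0 < δ := by
    rw [hδdef]
    simp only [lt_min_iff]
    refine ⟨hδ₀, by norm_num, half_pos hA0, ?_⟩
    exact div_pos (pow_pos hA0 3) (by nlinarith [pow_pos hCb 2])
  refine ⟨C, δ, hC0, hδpos, ?_⟩
  rintro x ⟨hx0, hxδ⟩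
  have hxδ₀ : x ∈ Set.Ioc (0:ℝ) δ₀ :=
    ⟨hx0, hxδ.trans (by rw [hδdef]; exact min_le_left _ _)⟩
  have hxhalf : x ≤ 1/2 := by
    refine hxδ.trans ?_
    rw [hδdef]
    exact (min_le_right _ _).trans (min_le_left _ _)
  have hxA : x ≤ A/2 := by
    refine hxδ.trans ?_
    rw [hδdef]
    exact (min_le_right _ _).trans ((min_le_right _ _).trans (min_le_left _ _))
  have hxCb : x ≤ A^3/(4*Cb^2) := by
    refine hxδ.trans ?_
    rw [hδdef]
    exact (min_le_right _ _).trans ((min_le_right _ _).trans (min_le_right _ _))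
  -- the orbit sequence
  obtain ⟨X, hX0, hO2, hstep, hg⟩ :
      ∃ X : ℕ → ℝ, X 0 = x ∧
        (∀ n : ℕ, |X n - A/((n:ℝ) + A/x)| ≤ Cb*((n:ℝ) + A/x)^(-(3:ℝ)/2)) ∧
        (∀ k : ℕ, X (k+1) = X k + h (X k) + γs (X k)) ∧
        (∀ k : ℕ, γs (X (k+1)) = γs (X k) + h (X k)) := by
    refine ⟨fun k => (T^[k] (x, γs x)).1, by simp, fun n => (horbit x hxδ₀ n).2, ?_, ?_⟩
    · intro k
      have h1 := (horbit x hxδ₀ k).1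
      show (T^[k+1] (x, γs x)).1 = _
      rw [Function.iterate_succ_apply', hT, h1]
    · intro k
      have h1 := (horbit x hxδ₀ k).1
      have h2 := (horbit x hxδ₀ (k+1)).1
      show γs ((T^[k+1] (x, γs x)).1) = _
      rw [← h2, Function.iterate_succ_apply', hT, h1]
      exact add_comm _ _
  obtain ⟨c, hcdef⟩ : ∃ c : ℝ, c = A / x := ⟨_, rfl⟩
  simp only [← hcdef] at hO2
  have hc0 : 0 < c := by rw [hcdef]; exact div_pos hA0 hx0
  have hc2 : 2 ≤ c := by
    rw [hcdef, le_div_iff₀ hx0]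
    linarith
  have hcCb : 2*Cb ≤ A * Real.sqrt c := by
    have h1 : x * (4*Cb^2) ≤ A^3 := by
      have := (le_div_iff₀ (by positivity : (0:ℝ) < 4*Cb^2)).mp hxCb
      linarith
    have h2 : (2*Cb/A)^2 ≤ c := by
      rw [hcdef, div_pow, div_le_div_iff₀ (by positivity) hx0]
      nlinarith
    have h3 : 2*Cb/A ≤ Real.sqrt c := by
      rw [show (2*Cb/A) = Real.sqrt ((2*Cb/A)^2) from
        (Real.sqrt_sq (div_nonneg (by linarith) hA0.le)).symm]
      exact Real.sqrt_le_sqrt h2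
    calc 2*Cb = A * (2*Cb/A) := by field_simp
    _ ≤ A * Real.sqrt c := mul_le_mul_of_nonneg_left h3 hA0.le
  have hct : ∀ k : ℕ, c ≤ (k:ℝ) + c := by
    intro k
    have : (0:ℝ) ≤ (k:ℝ) := Nat.cast_nonneg k
    linarith
  have htpos : ∀ k : ℕ, (0:ℝ) < (k:ℝ) + c := fun k => lt_of_lt_of_le hc0 (hct k)
  have ht2 : ∀ k : ℕ, (2:ℝ) ≤ (k:ℝ) + c := fun k => hc2.trans (hct k)
  -- key rpow estimate
  have hkeyr : ∀ k : ℕ, Cb * ((k:ℝ)+c)^(-(3:ℝ)/2) ≤ (A/((k:ℝ)+c))/2 := by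
    intro k
    have ht0 : (0:ℝ) < (k:ℝ)+c := htpos k
    have hsc : 0 < Real.sqrt c := Real.sqrt_pos.mpr hc0
    have h1 : ((k:ℝ)+c) ^ (-(3:ℝ)/2) = ((k:ℝ)+c) ^ (-(1:ℝ)/2) * ((k:ℝ)+c)⁻¹ := by
      rw [show (-(3:ℝ)/2) = (-(1:ℝ)/2) + (-1) by norm_num, Real.rpow_add ht0,
        Real.rpow_neg_one]
    have h2 : ((k:ℝ)+c) ^ (-(1:ℝ)/2) ≤ c ^ (-(1:ℝ)/2) :=
      Real.rpow_le_rpow_of_nonpos hc0 (hct k) (by norm_num)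
    have h3 : c ^ (-(1:ℝ)/2) = (Real.sqrt c)⁻¹ := by
      rw [show (-(1:ℝ)/2) = -(1/2) by norm_num, Real.rpow_neg hc0.le,
        Real.sqrt_eq_rpow]
    have h4 : Cb * (Real.sqrt c)⁻¹ ≤ A/2 := by
      rw [inv_eq_one_div, mul_one_div, div_le_div_iff₀ hsc (by norm_num : (0:ℝ) < 2)]
      linarith
    calc Cb * ((k:ℝ)+c)^(-(3:ℝ)/2) = (Cb * (((k:ℝ)+c) ^ (-(1:ℝ)/2))) * ((k:ℝ)+c)⁻¹ := by
          rw [h1]; ring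
    _ ≤ (Cb * (Real.sqrt c)⁻¹) * ((k:ℝ)+c)⁻¹ := by
        apply mul_le_mul_of_nonneg_right _ (inv_nonneg.mpr ht0.le)
        exact mul_le_mul_of_nonneg_left (h3 ▸ h2) hCb.le
    _ ≤ (A/2) * ((k:ℝ)+c)⁻¹ :=
        mul_le_mul_of_nonneg_right h4 (inv_nonneg.mpr ht0.le)
    _ = (A/((k:ℝ)+c))/2 := by ring
  -- bounds on X
  have hXbd : ∀ k : ℕ, (A/((k:ℝ)+c))/2 ≤ X k ∧ X k ≤ 2*(A/((k:ℝ)+c)) := by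
    intro k
    have h5 := hO2 k
    rw [abs_le] at h5
    have hk := hkeyr k
    have e3 : (0:ℝ) ≤ A/((k:ℝ)+c) := div_nonneg hA0.le (htpos k).le
    constructor
    · linarith [h5.1]
    · linarith [h5.2]
  have hXpos : ∀ k : ℕ, 0 < X k := fun k =>
    lt_of_lt_of_le (half_pos (div_pos hA0 (htpos k))) (hXbd k).1
  have hX2x : ∀ k : ℕ, X k ≤ 2*x := by
    intro k
    refine (hXbd k).2.trans ?_
    have h1 : A/((k:ℝ)+c) ≤ A/c :=
      div_le_div_of_nonneg_left hA0.le hc0 (hct k)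
    have h2 : A/c = x := by
      rw [hcdef]
      field_simp
    linarith
  have hX1 : ∀ k : ℕ, X k ≤ 1 := fun k => (hX2x k).trans (by linarith)
  have hXA : ∀ k : ℕ, X k ≤ A := fun k => (hX2x k).trans (by linarith)
  have habsh : ∀ k : ℕ, |h (X k)| ≤ (b + C₅) * (X k)^3 := by
    intro k
    have hh5 := hh (X k) (by rw [abs_of_pos (hXpos k)]; exact hX1 k)
    rw [abs_of_pos (hXpos k)] at hh5
    have h53 : (X k)^5 ≤ (X k)^3 :=
      pow_le_pow_of_le_one (hXpos k).le (hX1 k) (by norm_num)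
    have h1 : |h (X k)| ≤ |h (X k) - b*(X k)^3| + |b*(X k)^3| := by
      calc |h (X k)| = |(h (X k) - b*(X k)^3) + b*(X k)^3| := by ring_nf
      _ ≤ _ := abs_add_le _ _
    have h2 : |b*(X k)^3| = b*(X k)^3 :=
      abs_of_nonneg (mul_nonneg hb.le (pow_nonneg (hXpos k).le 3))
    have h3 : C₅ * (X k)^5 ≤ C₅ * (X k)^3 := mul_le_mul_of_nonneg_left h53 hC₅
    rw [h2] at h1
    nlinarith
  -- the per-step inequality
  have estep : ∀ k : ℕ, |γs (X k) + (X k)^2/A| ≤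
      |γs (X (k+1)) + (X (k+1))^2/A| + CR * (2*(A/((k:ℝ)+c)))^4 := by
    intro k
    have hx₀pos := hXpos k
    have hx₁pos := hXpos (k+1)
    have hx₀1 := hX1 k
    have hx₀A := hXA k
    have hs4 : X (k+1) ≤ 4 * X k := by
      have h1 := (hXbd (k+1)).2
      push_cast at h1
      have h2 : A/(((k:ℝ)+1)+c) ≤ A/((k:ℝ)+c) :=
        div_le_div_of_nonneg_left hA0.le (htpos k) (by linarith)
      have h3 : (A/((k:ℝ)+c))/2 ≤ X k := (hXbd k).1
      linarith
    have hh5 := hh (X k) (by rw [abs_of_pos hx₀pos]; exact hx₀1)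
    rw [abs_of_pos hx₀pos] at hh5
    -- algebraic identity
    have hkey : γs (X (k+1)) + (X (k+1))^2/A
        = (1 + (X k + X (k+1))/A - (X k)^2/A^2) * (γs (X k) + (X k)^2/A)
          + ((h (X k) - b*(X k)^3)*(1 + (X k + X (k+1))/A)
             + ((X k)^2/A^2)*(2*(X k)*(X k + X (k+1))/A + (X k)^2/A - h (X k))) := by
      rw [hg k, hstep k, hbA]
      field_simp
      ring
    have hμ1 : 1 ≤ 1 + (X k + X (k+1))/A - (X k)^2/A^2 := by
      have h1 : (X k)^2/A^2 ≤ (X k + X (k+1))/A := by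
        rw [div_le_div_iff₀ (by positivity) hA0]
        nlinarith [mul_le_mul_of_nonneg_right hx₀A (mul_nonneg hx₀pos.le hA0.le),
          mul_pos hx₁pos (mul_pos hA0 hA0)]
      linarith
    -- bound on the remainder R
    have hT1 : |(h (X k) - b*(X k)^3)*(1 + (X k + X (k+1))/A)| ≤ 6*C₅*(X k)^4 := by
      rw [abs_mul]
      have e1 : |1 + (X k + X (k+1))/A| ≤ 6 := by
        have n1 : (0:ℝ) ≤ (X k + X (k+1))/A := by
          apply div_nonneg _ hA0.le
          linarith
        have n2 : (X k + X (k+1))/A ≤ 5 := by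
          rw [div_le_iff₀ hA0]
          linarith
        rw [abs_of_nonneg (by linarith)]
        linarith
      have e2 : |h (X k) - b*(X k)^3| ≤ C₅*(X k)^4 := by
        refine hh5.trans ?_
        have h54 : (X k)^5 ≤ (X k)^4 :=
          pow_le_pow_of_le_one hx₀pos.le hx₀1 (by norm_num)
        exact mul_le_mul_of_nonneg_left h54 hC₅
      calc |h (X k) - b*(X k)^3| * |1 + (X k + X (k+1))/A|
          ≤ (C₅*(X k)^4) * 6 :=
            mul_le_mul e2 e1 (abs_nonneg _)
              (mul_nonneg hC₅ (pow_nonneg hx₀pos.le 4))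
      _ = 6*C₅*(X k)^4 := by ring
    have hT2 : |((X k)^2/A^2)*(2*(X k)*(X k + X (k+1))/A + (X k)^2/A - h (X k))|
        ≤ (11/A^3 + (b+C₅)/A)*(X k)^4 := by
      rw [abs_mul, abs_of_nonneg (show (0:ℝ) ≤ (X k)^2/A^2 by positivity)]
      have e3 : |2*(X k)*(X k + X (k+1))/A + (X k)^2/A - h (X k)|
          ≤ 11*(X k)^2/A + (b+C₅)*(X k)^3 := by
        have n0 : 2*(X k)*(X k + X (k+1))/A + (X k)^2/A
            = (2*(X k)*(X k + X (k+1)) + (X k)^2)/A := by ring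
        have n1 : (0:ℝ) ≤ (2*(X k)*(X k + X (k+1)) + (X k)^2)/A := by
          apply div_nonneg _ hA0.le
          nlinarith
        have n2 : (2*(X k)*(X k + X (k+1)) + (X k)^2)/A ≤ 11*(X k)^2/A := by
          apply (div_le_div_iff_of_pos_right hA0).mpr
          nlinarith [mul_nonneg hx₀pos.le
            (show (0:ℝ) ≤ 4*X k - X (k+1) by linarith)]
        calc |2*(X k)*(X k + X (k+1))/A + (X k)^2/A - h (X k)|
            ≤ |2*(X k)*(X k + X (k+1))/A + (X k)^2/A| + |h (X k)| := abs_sub _ _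
        _ ≤ 11*(X k)^2/A + (b+C₅)*(X k)^3 := by
            rw [n0, abs_of_nonneg n1]
            have := habsh k
            linarith
      have e4 : ((X k)^2/A^2) * (11*(X k)^2/A + (b+C₅)*(X k)^3)
          = 11*(X k)^4/A^3 + (b+C₅)*(X k)^5/A^2 := by ring
      have e5 : (b+C₅)*(X k)^5/A^2 ≤ (b+C₅)*(X k)^4/A := by
        rw [div_le_div_iff₀ (by positivity) hA0]
        have h1 : (X k)^5 * A ≤ (X k)^4 * A^2 := by
          nlinarith [mul_nonneg (mul_nonneg (pow_nonneg hx₀pos.le 4) hA0.le)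
            (show (0:ℝ) ≤ A - X k by linarith)]
        nlinarith [mul_le_mul_of_nonneg_left h1 (show (0:ℝ) ≤ b + C₅ by linarith)]
      calc ((X k)^2/A^2) * |2*(X k)*(X k + X (k+1))/A + (X k)^2/A - h (X k)|
          ≤ ((X k)^2/A^2) * (11*(X k)^2/A + (b+C₅)*(X k)^3) :=
            mul_le_mul_of_nonneg_left e3 (by positivity)
      _ = 11*(X k)^4/A^3 + (b+C₅)*(X k)^5/A^2 := e4
      _ ≤ 11*(X k)^4/A^3 + (b+C₅)*(X k)^4/A := by linarith
      _ = (11/A^3 + (b+C₅)/A)*(X k)^4 := by ring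
    have hRbd : |(h (X k) - b*(X k)^3)*(1 + (X k + X (k+1))/A)
        + ((X k)^2/A^2)*(2*(X k)*(X k + X (k+1))/A + (X k)^2/A - h (X k))|
        ≤ CR * (X k)^4 := by
      refine (abs_add_le _ _).trans ?_
      rw [hCRdef]
      have hsplit : (6*C₅ + 11/A^3 + (b+C₅)/A) * (X k)^4
          = 6*C₅*(X k)^4 + (11/A^3 + (b+C₅)/A)*(X k)^4 := by ring
      linarith only [hT1, hT2, hsplit]
    -- combine
    have hμ0 : (0:ℝ) ≤ 1 + (X k + X (k+1))/A - (X k)^2/A^2 := by linarith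
    have h7 : |γs (X k) + (X k)^2/A| ≤
        (1 + (X k + X (k+1))/A - (X k)^2/A^2) * |γs (X k) + (X k)^2/A| :=
      le_mul_of_one_le_left (abs_nonneg _) hμ1
    have h8 : (1 + (X k + X (k+1))/A - (X k)^2/A^2) * |γs (X k) + (X k)^2/A|
        = |(1 + (X k + X (k+1))/A - (X k)^2/A^2) * (γs (X k) + (X k)^2/A)| := by
      rw [abs_mul, abs_of_nonneg hμ0]
    have h9 : |(1 + (X k + X (k+1))/A - (X k)^2/A^2) * (γs (X k) + (X k)^2/A)|
        ≤ |γs (X (k+1)) + (X (k+1))^2/A| + CR * (X k)^4 := by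
      have heq : (1 + (X k + X (k+1))/A - (X k)^2/A^2) * (γs (X k) + (X k)^2/A)
          = (γs (X (k+1)) + (X (k+1))^2/A)
            - ((h (X k) - b*(X k)^3)*(1 + (X k + X (k+1))/A)
               + ((X k)^2/A^2)*(2*(X k)*(X k + X (k+1))/A + (X k)^2/A - h (X k))) := by
        rw [hkey]; ring
      rw [heq]
      refine (abs_sub _ _).trans ?_
      linarith [hRbd]
    have h10 : CR * (X k)^4 ≤ CR * (2*(A/((k:ℝ)+c)))^4 := by
      apply mul_le_mul_of_nonneg_left _ hCR0.le
      exact pow_le_pow_left₀ hx₀pos.le (hXbd k).2 4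
    linarith
  -- summing up
  have hsum : ∀ n : ℕ, |γs x + x^2/A| ≤ |γs (X n) + (X n)^2/A|
      + ∑ k ∈ Finset.range n, CR * (2*(A/((k:ℝ)+c)))^4 := by
    intro n
    induction n with
    | zero => simp [hX0]
    | succ n ih =>
      rw [Finset.sum_range_succ]
      have := estep n
      linarith
  -- bounding the sum
  have hsum2 : ∀ n : ℕ,
      ∑ k ∈ Finset.range n, CR * (2*(A/((k:ℝ)+c)))^4 ≤ C * x^3 := by
    intro n
    have e : ∀ k ∈ Finset.range n,
        CR * (2*(A/((k:ℝ)+c)))^4 = (16*CR*A^4) * ((((k:ℝ)+c)^4)⁻¹) := by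
      intro k _
      rw [← inv_pow]
      ring
    rw [Finset.sum_congr rfl e, ← Finset.mul_sum]
    have hc1 : (0:ℝ) < c - 1 := by linarith
    have h1 := tele_aux c hc2 n
    have h2 : (3*(c-1)^3)⁻¹ ≤ 8/(3*c^3) := by
      have hp1 : (0:ℝ) < 3*(c-1)^3 := mul_pos (by norm_num) (pow_pos hc1 3)
      have hp2 : (0:ℝ) < 3*c^3 := mul_pos (by norm_num) (pow_pos hc0 3)
      have hin : (0:ℝ) ≤ 21*c^2-30*c+12 := by linarith only [sq_nonneg (7*c-5)]
      have hprod : (0:ℝ) ≤ (c-2)*(21*c^2-30*c+12) :=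
        mul_nonneg (by linarith only [hc2]) hin
      rw [inv_eq_one_div, div_le_div_iff₀ hp1 hp2]
      linarith only [hprod]
    have h3 : 8/(3*c^3) = 8*x^3/(3*A^3) := by
      rw [hcdef, div_pow]
      rw [div_eq_div_iff (by positivity) (by positivity)]
      field_simp
    have h4 : (∑ k ∈ Finset.range n, ((((k:ℝ)+c)^4)⁻¹)) ≤ 8*x^3/(3*A^3) := by
      rw [← h3]
      exact h1.trans h2
    calc (16*CR*A^4) * ∑ k ∈ Finset.range n, ((((k:ℝ)+c)^4)⁻¹)
        ≤ (16*CR*A^4) * (8*x^3/(3*A^3)) := by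
          apply mul_le_mul_of_nonneg_left h4
          exact mul_nonneg (mul_nonneg (by norm_num) hCR0.le) (by positivity)
    _ = C * x^3 := by
        rw [hCdef]
        field_simp
        ring
  -- the tail bound
  have hlim : ∀ n : ℕ, |γs (X n) + (X n)^2/A|
      ≤ (6 + 8*A^2*(b+C₅))*(A/((n:ℝ)+c)) := by
    intro n
    have hgn : γs (X n) = X (n+1) - X n - h (X n) := by
      have := hstep n
      linarith
    have hq : (0:ℝ) ≤ A/((n:ℝ)+c) := div_nonneg hA0.le (htpos n).le
    have b1 : X (n+1) ≤ 2*(A/((n:ℝ)+c)) := by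
      have h1 := (hXbd (n+1)).2
      push_cast at h1
      have h2 : A/(((n:ℝ)+1)+c) ≤ A/((n:ℝ)+c) :=
        div_le_div_of_nonneg_left hA0.le (htpos n) (by linarith)
      linarith
    have b2 : X n ≤ 2*(A/((n:ℝ)+c)) := (hXbd n).2
    have b3 : |h (X n)| ≤ (b+C₅)*(X n)^3 := habsh n
    have b4 : (X n)^3 ≤ (2*(A/((n:ℝ)+c)))^3 :=
      pow_le_pow_left₀ (hXpos n).le b2 3
    have bq : A/((n:ℝ)+c) ≤ A := by
      have h1 : A/((n:ℝ)+c) ≤ A/1 :=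
        div_le_div_of_nonneg_left hA0.le one_pos (by linarith [ht2 n])
      simpa using h1
    have b5 : (2*(A/((n:ℝ)+c)))^3 ≤ 8*A^2*(A/((n:ℝ)+c)) := by
      have h1 : (A/((n:ℝ)+c))^2 ≤ A^2 := pow_le_pow_left₀ hq bq 2
      have h2 : (2*(A/((n:ℝ)+c)))^3 = 8*(A/((n:ℝ)+c))^2*(A/((n:ℝ)+c)) := by ring
      rw [h2]
      nlinarith [hq, h1]
    have b6 : (b+C₅)*(X n)^3 ≤ (b+C₅)*(8*A^2*(A/((n:ℝ)+c))) := by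
      apply mul_le_mul_of_nonneg_left _ (by linarith : (0:ℝ) ≤ b+C₅)
      linarith
    have b7 : (X n)^2/A ≤ 2*(A/((n:ℝ)+c)) := by
      have h1 : (X n)^2 ≤ A*(2*(A/((n:ℝ)+c))) := by
        nlinarith [hXpos n, hXA n, b2, hA0]
      have h2 : (X n)^2/A ≤ (A*(2*(A/((n:ℝ)+c))))/A := (div_le_div_iff_of_pos_right hA0).mpr h1
      have h3 : (A*(2*(A/((n:ℝ)+c))))/A = 2*(A/((n:ℝ)+c)) := by
        field_simp
      linarith
    have hhlo : -((b+C₅)*(X n)^3) ≤ h (X n) := neg_le_of_abs_le b3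
    have hhhi : h (X n) ≤ (b+C₅)*(X n)^3 := le_of_abs_le b3
    have hx2Anonneg : (0:ℝ) ≤ (X n)^2/A := by positivity
    have hXnpos := (hXpos n).le
    have hXn1pos := (hXpos (n+1)).le
    rw [hgn, abs_le]
    have hDn : (6 + 8*A^2*(b+C₅))*(A/((n:ℝ)+c))
        = 2*(A/((n:ℝ)+c)) + 2*(A/((n:ℝ)+c)) + (b+C₅)*(8*A^2*(A/((n:ℝ)+c)))
          + 2*(A/((n:ℝ)+c)) := by ring
    constructor
    · rw [hDn]
      linarith [b2, b6, hhhi, hXn1pos, hq, hx2Anonneg]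
    · rw [hDn]
      linarith [b1, b6, hhlo, hXnpos, hq, b7]
  -- conclusion by taking n → ∞
  have hfin : ∀ n : ℕ, |γs x + x^2/A|
      ≤ (6 + 8*A^2*(b+C₅))*(A/((n:ℝ)+c)) + C*x^3 := by
    intro n
    have h1 := hsum n
    have h2 := hsum2 n
    have h3 := hlim n
    linarith
  have htenA : Filter.Tendsto (fun n : ℕ => A/((n:ℝ)+c)) Filter.atTop (nhds 0) :=
    Filter.Tendsto.div_atTop tendsto_const_nhds
      (Filter.tendsto_atTop_add_const_right _ c tendsto_natCast_atTop_atTop)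
  have hten : Filter.Tendsto
      (fun n : ℕ => (6 + 8*A^2*(b+C₅))*(A/((n:ℝ)+c)) + C*x^3)
      Filter.atTop (nhds ((6 + 8*A^2*(b+C₅))*0 + C*x^3)) :=
    Filter.Tendsto.add (htenA.const_mul _) tendsto_const_nhds
  have hfinal : |γs x + x^2/A| ≤ (6 + 8*A^2*(b+C₅))*0 + C*x^3 :=
    ge_of_tendsto' hten hfin
  have hrw : A⁻¹ * x^2 = x^2/A := by ring
  rw [hrw]
  nlinarith [hfinal]
end

section
/- For the one-dimensional slope recursion u ↦ F(x,u) := 1 - 1/(1 + h'(x) + u), the fixed point equation u = F(x,u) with u ≥ 0 has the unique solution ū(x) = (-h'(x) + √(h'(x)² + 4h'(x)))/2, and ū(x) = √(3b)|x| + O(x²) as x → 0. -/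
set_option maxHeartbeats 1000000 in
/-- For the slope recursion `F(x,u) = 1 - 1/(1 + h'(x) + u)`, the fixed point equation
`u = F(x,u)` with `u ≥ 0` has the unique solution
`ū(x) = (-h'(x) + √(h'(x)² + 4h'(x)))/2`, and `ū(x) = √(3b)|x| + O(x²)` as `x → 0`. -/
theorem slope_fixed_point_unique_and_asymptotics
    (h : ℝ → ℝ) (hsmooth : ContDiff ℝ (⊤ : ℕ∞) h)
    (b : ℝ) (hb : 0 < b)
    (hpos : ∀ x : ℝ, x ≠ 0 → 0 < deriv h x)
    (C₅ : ℝ) (hh' : ∀ x : ℝ, |x| ≤ 1 → |deriv h x - 3 * b * x ^ 2| ≤ C₅ * x ^ 4)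
    (F : ℝ → ℝ → ℝ)
    (hF : ∀ x u, F x u = 1 - 1 / (1 + deriv h x + u))
    (ubar : ℝ → ℝ)
    (hubar : ∀ x, ubar x =
      (-deriv h x + Real.sqrt ((deriv h x) ^ 2 + 4 * deriv h x)) / 2) :
    (∀ x : ℝ, x ≠ 0 →
      0 ≤ ubar x ∧ F x (ubar x) = ubar x ∧
      ∀ u : ℝ, 0 ≤ u → F x u = u → u = ubar x) ∧
    ∃ C δ : ℝ, 0 < C ∧ 0 < δ ∧ ∀ x : ℝ, |x| ≤ δ →
      abs (ubar x - Real.sqrt (3 * b) * |x|) ≤ C * x ^ 2 := by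
  constructor
  · intro x hx
    set d := deriv h x with hd
    have hdpos : 0 < d := hpos x hx
    have hnn : (0:ℝ) ≤ d ^ 2 + 4 * d := by nlinarith
    set s := Real.sqrt (d ^ 2 + 4 * d) with hsdef
    have hs2 : s ^ 2 = d ^ 2 + 4 * d := Real.sq_sqrt hnn
    have hsnn : 0 ≤ s := Real.sqrt_nonneg _
    have hsd : d ≤ s := by nlinarith
    have hub : ubar x = (-d + s) / 2 := hubar x
    have hunn : 0 ≤ ubar x := by rw [hub]; linarith
    have hden : 0 < 1 + d + ubar x := by linarith
    refine ⟨hunn, ?_, ?_⟩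
    · rw [hF, hub]
      have hden' : (0:ℝ) < 1 + d + (-d + s) / 2 := by linarith
      have hinv : 1 / (1 + d + (-d + s) / 2) = 1 - (-d + s) / 2 := by
        rw [div_eq_iff (ne_of_gt hden')]
        linear_combination (1/4 : ℝ) * hs2
      rw [hinv]; ring
    · intro u hu hFu
      rw [hF] at hFu
      have hdenu : 0 < 1 + d + u := by linarith
      have hFu' : 1 / (1 + d + u) = 1 - u := by linarith
      rw [div_eq_iff (ne_of_gt hdenu)] at hFu'
      have hkey : u ^ 2 + u * d - d = 0 := by linear_combination hFu'
      have hkey2 : (ubar x) ^ 2 + (ubar x) * d - d = 0 := by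
        rw [hub]; linear_combination (1/4 : ℝ) * hs2
      have hfac : (u - ubar x) * (u + ubar x + d) = 0 := by
        linear_combination hkey - hkey2
      rcases mul_eq_zero.mp hfac with h1 | h2
      · linarith
      · linarith
  · have hC5 : 0 ≤ C₅ := by
      have h1 := hh' 1 (by norm_num)
      have := abs_nonneg (deriv h 1 - 3 * b * 1 ^ 2)
      nlinarith
    have h3b : (0:ℝ) < 3 * b := by linarith
    have hsb : 0 < Real.sqrt (3 * b) := Real.sqrt_pos.mpr h3b
    set K := ((3 * b + C₅) ^ 2 + 4 * C₅) / (2 * Real.sqrt (3 * b)) with hK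
    have hcoef : 0 ≤ (3 * b + C₅) ^ 2 + 4 * C₅ := by nlinarith [sq_nonneg (3 * b + C₅)]
    have hKnn : 0 ≤ K := by
      apply div_nonneg hcoef; positivity
    have hKmul : K * (2 * Real.sqrt (3 * b)) = (3 * b + C₅) ^ 2 + 4 * C₅ := by
      rw [hK]; field_simp
    refine ⟨(3 * b + C₅) / 2 + K + 1, 1, by positivity, one_pos, ?_⟩
    intro x hx1
    by_cases hx : x = 0
    · subst hx
      have h0 := hh' 0 (by norm_num)
      norm_num at h0
      rw [hubar 0, h0]
      simp
    · have hdpos := hpos x hx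
      set d := deriv h x with hd
      have he := abs_le.mp (hh' x hx1)
      have hxpos : 0 < |x| := abs_pos.mpr hx
      have hax : |x| ^ 2 = x ^ 2 := sq_abs x
      have hx21 : x ^ 2 ≤ 1 := by nlinarith
      have hx2a : x ^ 2 ≤ |x| := by nlinarith
      have hx4 : x ^ 4 ≤ x ^ 2 := by nlinarith
      have hx4b : x ^ 4 ≤ x ^ 2 * |x| := by nlinarith
      have hdle : d ≤ (3 * b + C₅) * x ^ 2 := by nlinarith
      have hd2 : d ^ 2 ≤ ((3 * b + C₅) * x ^ 2) ^ 2 := by nlinarith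
      have hnn : (0:ℝ) ≤ d ^ 2 + 4 * d := by nlinarith
      set s := Real.sqrt (d ^ 2 + 4 * d) with hsdef
      have hs2 : s ^ 2 = d ^ 2 + 4 * d := Real.sq_sqrt hnn
      have hsnn : 0 ≤ s := Real.sqrt_nonneg _
      set r := Real.sqrt (3 * b) * |x| with hr
      have hrpos : 0 < r := by positivity
      have hr2 : r ^ 2 = 3 * b * x ^ 2 := by
        rw [hr, mul_pow, Real.sq_sqrt (le_of_lt h3b), sq_abs]
      have hub : ubar x = (-d + s) / 2 := hubar x
      clear_value d s r
      have hA : |s ^ 2 - 4 * r ^ 2| ≤ ((3 * b + C₅) ^ 2 + 4 * C₅) * x ^ 4 := by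
        rw [hs2, hr2, abs_le]
        constructor
        · nlinarith [sq_nonneg d, he.1, hd2]
        · nlinarith [he.2, hd2]
      have hstep : |s - 2 * r| ≤ K * x ^ 2 := by
        have hpos2 : 0 < s + 2 * r := by linarith
        have h1 : |s - 2 * r| * (s + 2 * r) = |s ^ 2 - 4 * r ^ 2| := by
          rw [← abs_of_pos hpos2, ← abs_mul]
          congr 1; ring
        have h2b : K * x ^ 2 * (2 * r) = ((3 * b + C₅) ^ 2 + 4 * C₅) * (x ^ 2 * |x|) := by
          calc K * x ^ 2 * (2 * r) = K * (2 * Real.sqrt (3 * b)) * (x ^ 2 * |x|) := by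
                rw [hr]; ring
            _ = ((3 * b + C₅) ^ 2 + 4 * C₅) * (x ^ 2 * |x|) := by rw [hKmul]
        have h2a : ((3 * b + C₅) ^ 2 + 4 * C₅) * x ^ 4 ≤
            ((3 * b + C₅) ^ 2 + 4 * C₅) * (x ^ 2 * |x|) :=
          mul_le_mul_of_nonneg_left hx4b hcoef
        have hKx : 0 ≤ K * x ^ 2 := mul_nonneg hKnn (sq_nonneg x)
        have h2c : K * x ^ 2 * (2 * r) ≤ K * x ^ 2 * (s + 2 * r) :=
          mul_le_mul_of_nonneg_left (by linarith) hKx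
        have h3 : |s - 2 * r| * (s + 2 * r) ≤ K * x ^ 2 * (s + 2 * r) := by
          rw [h1]; linarith
        exact le_of_mul_le_mul_right h3 hpos2
      have hs2r := abs_le.mp hstep
      have m1 : 0 ≤ K * x ^ 2 := mul_nonneg hKnn (sq_nonneg x)
      have m2 : 0 ≤ (3 * b + C₅) * x ^ 2 := le_trans (le_of_lt hdpos) hdle
      have m3 : 0 ≤ x ^ 2 := sq_nonneg x
      rw [hub, abs_le]
      constructor <;> linarith [hs2r.1, hs2r.2]
end

section
/- Suppose the positive cone C₊ = {(v₁,v₂) : v₁v₂ ≥ 0} is invariant under DT, and that for every ξ ≠ 0, D_ξT²(C₊) ⊂ int(C₊) ∪ {0}. For the map T(x,y) = (x+h(x)+y, h(x)+y) with h'(x) > 0 for x ≠ 0 and h'(0) = 0, verify: D_ξT(C₊) ⊆ C₊ for all ξ, and D_ξT²(C₊ \ {0}) ⊂ int(C₊) whenever the orbit point ξ or Tξ has nonzero x-coordinate. -/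
private lemma cone_inv_aux (a v1 v2 : ℝ) (ha : 0 ≤ a) (hv : 0 ≤ v1 * v2) :
    0 ≤ ((1 + a) * v1 + v2) * (a * v1 + v2) := by
  nlinarith [sq_nonneg v1, sq_nonneg v2, mul_nonneg ha hv,
    mul_nonneg (mul_nonneg ha ha) (sq_nonneg v1), mul_nonneg ha (sq_nonneg v1)]

private lemma cone_strict_aux (b w1 w2 : ℝ) (hb : 0 ≤ b) (hw : 0 ≤ w1 * w2)
    (hne : (0 < b ∧ (w1 ≠ 0 ∨ w2 ≠ 0)) ∨ w2 ≠ 0) :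
    0 < ((1 + b) * w1 + w2) * (b * w1 + w2) := by
  rcases hne with ⟨hbpos, hw1 | hw1⟩ | hw2
  · nlinarith [sq_pos_of_ne_zero hw1, sq_nonneg w2, mul_nonneg hb hw,
      mul_nonneg (mul_nonneg hb hb) (sq_nonneg w1)]
  · nlinarith [sq_pos_of_ne_zero hw1, sq_nonneg w1, mul_nonneg hb hw,
      mul_nonneg (mul_nonneg hb hb) (sq_nonneg w1), mul_nonneg hb (sq_nonneg w1)]
  · nlinarith [sq_pos_of_ne_zero hw2, sq_nonneg w1, mul_nonneg hb hw,
      mul_nonneg (mul_nonneg hb hb) (sq_nonneg w1), mul_nonneg hb (sq_nonneg w1)]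

/-- Cone invariance: the positive cone `C₊ = {v : v₁v₂ ≥ 0}` is invariant under `DT`,
and `D_ξT²` maps `C₊ \ {0}` strictly inside `C₊` whenever `ξ` or `Tξ` has nonzero
`x`-coordinate.  Here `DT(x) = [[1+h'(x),1],[h'(x),1]]` acts on tangent vectors. -/
theorem positive_cone_invariance
    (h : ℝ → ℝ) (hsmooth : ContDiff ℝ (⊤ : ℕ∞) h)
    (h0 : h 0 = 0) (h0' : deriv h 0 = 0)
    (hpos : ∀ x : ℝ, x ≠ 0 → 0 < deriv h x)
    (T : ℝ × ℝ → ℝ × ℝ)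
    (hT : ∀ p : ℝ × ℝ, T p = (p.1 + h p.1 + p.2, h p.1 + p.2))
    (DT : ℝ → ℝ × ℝ → ℝ × ℝ)
    (hDT : ∀ x : ℝ, ∀ v : ℝ × ℝ,
      DT x v = ((1 + deriv h x) * v.1 + v.2, deriv h x * v.1 + v.2)) :
    (∀ ξ : ℝ × ℝ, ∀ v : ℝ × ℝ, 0 ≤ v.1 * v.2 → 0 ≤ (DT ξ.1 v).1 * (DT ξ.1 v).2) ∧
    (∀ ξ : ℝ × ℝ, ξ.1 ≠ 0 ∨ (T ξ).1 ≠ 0 →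
      ∀ v : ℝ × ℝ, 0 ≤ v.1 * v.2 → v ≠ 0 →
        0 < (DT (T ξ).1 (DT ξ.1 v)).1 * (DT (T ξ).1 (DT ξ.1 v)).2) := by
  have hnn : ∀ x : ℝ, 0 ≤ deriv h x := by
    intro x
    rcases eq_or_ne x 0 with rfl | hx
    · simp [h0']
    · exact (hpos x hx).le
  constructor
  · intro ξ v hv
    rw [hDT]
    exact cone_inv_aux _ _ _ (hnn ξ.1) hv
  · intro ξ hξ v hv hv0
    obtain ⟨v1, v2⟩ := v
    simp only [Prod.mk.injEq, ne_eq, Prod.mk_eq_zero, not_and_or] at hv0 ⊢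
    simp only at hv
    have ha : 0 ≤ deriv h ξ.1 := hnn ξ.1
    have hb : 0 ≤ deriv h (T ξ).1 := hnn (T ξ).1
    rw [hDT, hDT]
    simp only
    set a := deriv h ξ.1 with ha_def
    set b := deriv h (T ξ).1 with hb_def
    have hw : 0 ≤ ((1 + a) * v1 + v2) * (a * v1 + v2) := cone_inv_aux _ _ _ ha hv
    apply cone_strict_aux _ _ _ hb hw
    rcases lt_or_eq_of_le hb with hbpos | hbzero
    · left
      refine ⟨hbpos, ?_⟩
      by_contra hc
      push_neg at hc
      obtain ⟨hc1, hc2⟩ := hc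
      have h1 : v1 = 0 := by linarith
      have h2 : v2 = 0 := by
        have := hc2; rw [h1] at this; linarith
      rcases hv0 with hv0 | hv0 <;> [exact hv0 h1; exact hv0 h2]
    · right
      have hapos : 0 < a := by
        rcases hξ with hx | hx
        · exact hpos ξ.1 hx
        · exact absurd (hpos _ hx) (by rw [← hb_def, ← hbzero]; simp)
      intro hz
      have hv1 : v1 = 0 := by
        have hv2' : v2 = -(a * v1) := by linarith
        rw [hv2'] at hv
        have hle : v1 * v1 ≤ 0 := by nlinarith
        exact mul_self_eq_zero.mp (le_antisymm hle (mul_self_nonneg v1))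
      have hv2 : v2 = 0 := by rw [hv1] at hz; linarith
      rcases hv0 with hv0 | hv0 <;> [exact hv0 hv1; exact hv0 hv2]
end

section
/- If the slope variable satisfies uₙ₊₁ = F(xₙ, uₙ) with F(x,u) = 1 - 1/(1+h'(x)+u), then for all n, uₙ = Σ_{i=1}^{n} λ_{u,i}⁻¹ h'(x_{n-i}) + λ_{u,n}⁻¹ u₀, where λ_{u,i} is the product of the factors (1 + h'(x_{n-j}) + u_{n-j}) for j = 1,…,i. -/
open Finset

private lemma prod_shift (g : ℕ → ℝ) (n i : ℕ) :
    (∏ j ∈ Finset.Icc 1 (i + 1), g (n + 1 - j)) = g n * ∏ j ∈ Finset.Icc 1 i, g (n - j) := by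
  have h1 : Finset.Icc 1 (i + 1) = insert 1 (Finset.Icc 2 (i + 1)) := by
    ext a; simp; omega
  have h2 : Finset.Icc 2 (i + 1) = Finset.map (addRightEmbedding 1) (Finset.Icc 1 i) := by
    rw [Finset.map_add_right_Icc]
  rw [h1, Finset.prod_insert (by simp), h2, Finset.prod_map]
  congr 1
  apply Finset.prod_congr rfl
  intro j hj
  simp only [addRightEmbedding_apply]
  congr 1
  omega

/-- Telescoping identity for the slope recursion `uₙ₊₁ = F(xₙ, uₙ)` with
`F(x,u) = 1 - 1/(1 + h'(x) + u)`: for all `n`,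
`uₙ = Σ_{i=1}^{n} λ_{u,i}⁻¹ h'(x_{n-i}) + λ_{u,n}⁻¹ u₀`, where
`λ_{u,i} = Π_{j=1}^{i} (1 + h'(x_{n-j}) + u_{n-j})`. -/
theorem slope_telescoping_identity
    (h : ℝ → ℝ) (x u : ℕ → ℝ) (hu0 : 0 ≤ u 0)
    (hpos : ∀ n : ℕ, 0 < 1 + deriv h (x n) + u n)
    (hrec : ∀ n : ℕ, u (n + 1) = 1 - 1 / (1 + deriv h (x n) + u n)) :
    ∀ n : ℕ,
      u n = (∑ i ∈ Finset.Icc 1 n,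
              (∏ j ∈ Finset.Icc 1 i, (1 + deriv h (x (n - j)) + u (n - j)))⁻¹
                * deriv h (x (n - i)))
            + (∏ j ∈ Finset.Icc 1 n, (1 + deriv h (x (n - j)) + u (n - j)))⁻¹ * u 0 := by
  intro n
  induction n with
  | zero => simp
  | succ n ih =>
    have hne : (1 + deriv h (x n) + u n) ≠ 0 := ne_of_gt (hpos n)
    have hstep : u (n + 1) = (1 + deriv h (x n) + u n)⁻¹ * deriv h (x n)
        + (1 + deriv h (x n) + u n)⁻¹ * u n := by
      rw [hrec n]
      field_simp
      ring
    have hps : ∀ i : ℕ,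
        (∏ j ∈ Finset.Icc 1 (i + 1), (1 + deriv h (x (n + 1 - j)) + u (n + 1 - j)))
          = (1 + deriv h (x n) + u n)
              * ∏ j ∈ Finset.Icc 1 i, (1 + deriv h (x (n - j)) + u (n - j)) :=
      fun i => prod_shift (fun k => 1 + deriv h (x k) + u k) n i
    have h1 : Finset.Icc 1 (n + 1) = insert 1 (Finset.Icc 2 (n + 1)) := by
      ext a; simp; omega
    have h2 : Finset.Icc 2 (n + 1) = Finset.map (addRightEmbedding 1) (Finset.Icc 1 n) := by
      rw [Finset.map_add_right_Icc]
    rw [hstep]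
    nth_rewrite 3 [ih]
    rw [hps n, h1, Finset.sum_insert (by simp), h2, Finset.sum_map]
    have hterm1 : (∏ j ∈ Finset.Icc 1 1, (1 + deriv h (x (n + 1 - j)) + u (n + 1 - j)))⁻¹
          * deriv h (x (n + 1 - 1))
        = (1 + deriv h (x n) + u n)⁻¹ * deriv h (x n) := by simp
    have hterms : ∀ i ∈ Finset.Icc 1 n,
        (∏ j ∈ Finset.Icc 1 (addRightEmbedding 1 i),
            (1 + deriv h (x (n + 1 - j)) + u (n + 1 - j)))⁻¹
            * deriv h (x (n + 1 - addRightEmbedding 1 i))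
        = (1 + deriv h (x n) + u n)⁻¹
            * ((∏ j ∈ Finset.Icc 1 i, (1 + deriv h (x (n - j)) + u (n - j)))⁻¹
                * deriv h (x (n - i))) := by
      intro i hi
      simp only [addRightEmbedding_apply]
      rw [hps i, mul_inv]
      have : n + 1 - (i + 1) = n - i := by omega
      rw [this, mul_assoc]
    rw [hterm1, Finset.sum_congr rfl hterms, mul_inv, ← Finset.mul_sum]
    ring
end

section
/- Let Υ_E(x) be defined implicitly near 0 by H(x, Υ_E(x)) = E with Υ_E ≤ 0, where H(x,y) = (1/2)y² - G(x) + (1/2)h(x)y - (1/12)h'(x)y² + (1/12)h(x)². Then Υ_E(x) = -√(2(E + G(x)))(1 + O(x²)) + O(x³) as x → 0, uniformly for small E > 0. -/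
open intervalIntegral

set_option maxHeartbeats 1000000 in
private lemma aux_main_bound (b γ s X au du2 a2 P : ℝ)
    (hb : 0 < b) (hγpos : 0 < γ) (hspos : 0 < s) (hX : 0 ≤ X)
    (hP : P ≤ au + du2 / 6 + a2 / 6)
    (m1 : au ≤ 2 * b * X ^ 3 * (4 * b * X ^ 3 + 2 * s))
    (m3 : du2 ≤ 4 * b * X ^ 2 * (4 * b * X ^ 3 + 2 * s) ^ 2)
    (m4 : a2 ≤ (2 * b * X ^ 3) ^ 2)
    (c1 : b ^ 2 * X ^ 6 ≤ b ^ 2 * (2 * γ * s * X ^ 3))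
    (c2 : b ^ 3 * X ^ 6 ≤ b ^ 3 * (2 * γ * s * X ^ 3))
    (c3 : b ^ 3 * X ^ 8 ≤ b ^ 3 * X ^ 6)
    (c4 : b ^ 2 * s * X ^ 5 ≤ b ^ 2 * s * X ^ 3) :
    P ≤ (γ * (18*b^2 + 22*b^3) + 11*b^2 + 7*b + 1) * (s ^ 2 * X ^ 2 + s * X ^ 3) := by
  linarith [mul_nonneg (mul_nonneg hspos.le hspos.le) (sq_nonneg X),
      mul_nonneg hspos.le (pow_nonneg hX 3),
      mul_nonneg (mul_nonneg hγpos.le (sq_nonneg b)) (mul_nonneg (mul_nonneg hspos.le hspos.le) (pow_nonneg hX 2)),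
      mul_nonneg (mul_nonneg hγpos.le (pow_nonneg hb.le 3)) (mul_nonneg (mul_nonneg hspos.le hspos.le) (pow_nonneg hX 2)),
      mul_nonneg (sq_nonneg b) (mul_nonneg (mul_nonneg hspos.le hspos.le) (pow_nonneg hX 2)),
      mul_nonneg hb.le (mul_nonneg (mul_nonneg hspos.le hspos.le) (pow_nonneg hX 2)),
      mul_nonneg hb.le (mul_nonneg hspos.le (pow_nonneg hX 3)),
      mul_nonneg (mul_nonneg hγpos.le (sq_nonneg b)) (mul_nonneg hspos.le (pow_nonneg hX 3)),
      mul_nonneg (mul_nonneg hγpos.le (pow_nonneg hb.le 3)) (mul_nonneg hspos.le (pow_nonneg hX 3)),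
      mul_nonneg (sq_nonneg b) (mul_nonneg hspos.le (pow_nonneg hX 3))]

set_option maxHeartbeats 1000000 in
private lemma aux_abs_u_bound (t a s : ℝ) (ht : 0 ≤ t) (ha : 0 ≤ a) (hs : 0 < s)
    (h : t ^ 2 ≤ 2 * s ^ 2 + 2 * (a * t)) : t ≤ 2 * a + 2 * s := by
  nlinarith [sq_nonneg (t - 2 * s), mul_nonneg ha hs.le, mul_pos hs hs]

set_option maxHeartbeats 1000000 in
/-- For `H(x,y) = (1/2)y² - G(x) + (1/2)h(x)y - (1/12)h'(x)y² + (1/12)h(x)²`, the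
level curve `Υ_E ≤ 0` defined by `H(x, Υ_E(x)) = E` satisfies
`Υ_E(x) = -√(2(E + G(x)))(1 + O(x²)) + O(x³)` as `x → 0`, uniformly for small `E > 0`. -/
theorem level_curve_asymptotics
    (h : ℝ → ℝ) (hsmooth : ContDiff ℝ (⊤ : ℕ∞) h) (hodd : ∀ x, h (-x) = -h x)
    (b : ℝ) (hb : 0 < b)
    (C₅ : ℝ) (hh : ∀ x : ℝ, |x| ≤ 1 → |h x - b * x ^ 3| ≤ C₅ * |x| ^ 5)
    (hh' : ∀ x : ℝ, |x| ≤ 1 → |deriv h x - 3 * b * x ^ 2| ≤ C₅ * x ^ 4)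
    (G : ℝ → ℝ) (hG : ∀ x, G x = ∫ z in (0:ℝ)..x, h z)
    (H : ℝ → ℝ → ℝ)
    (hH : ∀ x y, H x y = (1/2) * y ^ 2 - G x + (1/2) * h x * y
        - (1/12) * deriv h x * y ^ 2 + (1/12) * (h x) ^ 2)
    (Υ : ℝ → ℝ → ℝ) (δ₁ E₁ : ℝ) (hδ₁ : 0 < δ₁) (hE₁ : 0 < E₁)
    (hΥ : ∀ E ∈ Set.Ioc (0:ℝ) E₁, ∀ x : ℝ, |x| ≤ δ₁ →
      H x (Υ E x) = E ∧ Υ E x ≤ 0) :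
    ∃ C δ E₀ : ℝ, 0 < C ∧ 0 < δ ∧ 0 < E₀ ∧
      ∀ E ∈ Set.Ioc (0:ℝ) E₀, ∀ x : ℝ, |x| ≤ δ →
        |Υ E x + Real.sqrt (2 * (E + G x))| ≤
          C * (Real.sqrt (2 * (E + G x)) * x ^ 2 + |x| ^ 3) := by
  -- C₅ is nonnegative
  have hC₅ : 0 ≤ C₅ := by
    have h1 := hh 1 (by norm_num)
    simp only [abs_one, one_pow, mul_one] at h1
    exact le_trans (abs_nonneg _) h1
  set β := Real.sqrt b with hβdef
  have hβpos : 0 < β := Real.sqrt_pos.mpr hb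
  have hβ2 : β ^ 2 = b := Real.sq_sqrt hb.le
  set γ := 1 / β with hγdef
  have hγpos : 0 < γ := by positivity
  have hγβ : γ * β = 1 := by rw [hγdef]; field_simp
  set m := min (b / (8 * (C₅ + 1))) (3 / (4 * b)) with hmdef
  have hmpos : 0 < m := lt_min (by positivity) (by positivity)
  refine ⟨γ * (18*b^2 + 22*b^3) + 11*b^2 + 7*b + 1,
    min δ₁ (min 1 (Real.sqrt m)), E₁, by positivity, ?_, hE₁, ?_⟩
  · exact lt_min hδ₁ (lt_min one_pos (Real.sqrt_pos.mpr hmpos))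
  intro E hE x hx
  have hX : (0:ℝ) ≤ |x| := abs_nonneg x
  have hxδ₁ : |x| ≤ δ₁ := le_trans hx (min_le_left _ _)
  have hx1 : |x| ≤ 1 := le_trans hx (le_trans (min_le_right _ _) (min_le_left _ _))
  have hxm : x ^ 2 ≤ m := by
    have h1 : |x| ≤ Real.sqrt m := le_trans hx (le_trans (min_le_right _ _) (min_le_right _ _))
    have h2 := Real.sq_sqrt hmpos.le
    nlinarith [sq_abs x, Real.sqrt_nonneg m]
  have hxm1 : x ^ 2 ≤ b / (8 * (C₅ + 1)) := le_trans hxm (min_le_left _ _)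
  have hxm2 : x ^ 2 ≤ 3 / (4 * b) := le_trans hxm (min_le_right _ _)
  have hC5x : C₅ * x ^ 2 ≤ b / 8 := by
    have h1 : x ^ 2 * (8 * (C₅ + 1)) ≤ b := (le_div_iff₀ (by positivity)).mp hxm1
    nlinarith [sq_nonneg x]
  have h4b : x ^ 2 * (4 * b) ≤ 3 := (le_div_iff₀ (by positivity)).mp hxm2
  -- bounds on h and h'
  have hhx := hh x hx1
  have hhx' := hh' x hx1
  have hA : |h x| ≤ 2 * b * |x| ^ 3 := by
    have h1 : |h x| - |b * x ^ 3| ≤ |h x - b * x ^ 3| := abs_sub_abs_le_abs_sub _ _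
    have h2 : |b * x ^ 3| = b * |x| ^ 3 := by
      rw [abs_mul, abs_pow, abs_of_pos hb]
    have h3 : |x| ^ 5 = x ^ 2 * |x| ^ 3 := by
      rw [show (5:ℕ) = 2 + 3 from rfl, pow_add, sq_abs]
    nlinarith [pow_nonneg hX 3, mul_nonneg hb.le (pow_nonneg hX 3)]
  have hB : |deriv h x| ≤ 4 * b * x ^ 2 := by
    have h1 : |deriv h x| - |3 * b * x ^ 2| ≤ |deriv h x - 3 * b * x ^ 2| :=
      abs_sub_abs_le_abs_sub _ _
    have h2 : |3 * b * x ^ 2| = 3 * b * x ^ 2 := abs_of_nonneg (by positivity)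
    nlinarith [sq_nonneg x]
  have hB3 : |deriv h x| ≤ 3 := by nlinarith
  -- lower bound on G
  have hint1 : IntervalIntegrable h MeasureTheory.volume 0 x :=
    hsmooth.continuous.intervalIntegrable _ _
  have hint2 : IntervalIntegrable (fun z => b * z ^ 3) MeasureTheory.volume 0 x :=
    (continuous_const.mul (continuous_pow 3) : Continuous fun z : ℝ => b * z ^ 3).intervalIntegrable _ _
  have hG3 : ∫ z in (0:ℝ)..x, b * z ^ 3 = b * x ^ 4 / 4 := by
    rw [intervalIntegral.integral_const_mul, integral_pow]
    norm_num
    ring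
  have hGsub : G x - b * x ^ 4 / 4 = ∫ z in (0:ℝ)..x, (h z - b * z ^ 3) := by
    rw [intervalIntegral.integral_sub hint1 hint2, hG, hG3]
  have hGest : |G x - b * x ^ 4 / 4| ≤ C₅ * |x| ^ 5 * |x| := by
    rw [hGsub]
    have key := intervalIntegral.norm_integral_le_of_norm_le_const
      (a := (0:ℝ)) (b := x) (C := C₅ * |x| ^ 5) (f := fun z => h z - b * z ^ 3) ?_
    · simpa using key
    · intro z hz
      have hz1 : |z| ≤ |x| := by
        rcases Set.mem_uIoc.mp hz with ⟨h1, h2⟩ | ⟨h1, h2⟩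
        · rw [abs_of_pos h1]; exact h2.trans (le_abs_self x)
        · rw [abs_of_nonpos h2]; linarith [neg_abs_le x]
      calc ‖h z - b * z ^ 3‖ = |h z - b * z ^ 3| := rfl
        _ ≤ C₅ * |z| ^ 5 := hh z (hz1.trans hx1)
        _ ≤ C₅ * |x| ^ 5 :=
            mul_le_mul_of_nonneg_left (pow_le_pow_left₀ (abs_nonneg z) hz1 5) hC₅
  have h6eq : C₅ * |x| ^ 5 * |x| = C₅ * x ^ 6 := by
    have e : |x| ^ 5 * |x| = x ^ 6 := by
      calc |x| ^ 5 * |x| = (|x| ^ 2) ^ 3 := by ring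
        _ = (x ^ 2) ^ 3 := by rw [sq_abs]
        _ = x ^ 6 := by ring
    rw [mul_assoc, e]
  rw [h6eq] at hGest
  have hGlow : b * x ^ 4 / 8 ≤ G x := by
    have h2 := (abs_le.mp hGest).1
    nlinarith [hC5x, sq_nonneg (x ^ 2)]
  have hG0 : 0 ≤ G x := le_trans (by positivity) hGlow
  -- set up u and s
  obtain ⟨hE0, hEE₁⟩ := hE
  obtain ⟨heq, hu0⟩ := hΥ E ⟨hE0, hEE₁⟩ x hxδ₁
  rw [hH] at heq
  set u := Υ E x with hudef
  set s := Real.sqrt (2 * (E + G x)) with hsdef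
  have hspos : 0 < s := Real.sqrt_pos.mpr (by linarith)
  have hs2 : s ^ 2 = 2 * (E + G x) := Real.sq_sqrt (by linarith)
  have key : u ^ 2 - s ^ 2 = -(h x * u) + deriv h x * u ^ 2 / 6 - (h x) ^ 2 / 6 := by
    linear_combination 2 * heq - hs2
  have habs1 : -(h x * u) ≤ |h x| * |u| := by
    rw [← abs_mul]; exact neg_le_abs _
  have habs1' : -(|h x| * |u|) ≤ -(h x * u) := by
    rw [← abs_mul]; simpa using le_abs_self (h x * u)
  have habs2 : deriv h x * u ^ 2 ≤ |deriv h x| * u ^ 2 :=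
    mul_le_mul_of_nonneg_right (le_abs_self _) (sq_nonneg u)
  have habs2' : -(|deriv h x| * u ^ 2) ≤ deriv h x * u ^ 2 := by
    have := mul_le_mul_of_nonneg_right (neg_abs_le (deriv h x)) (sq_nonneg u)
    linarith [this]
  -- bound on |u|
  have hd3 : |deriv h x| * u ^ 2 ≤ 3 * u ^ 2 :=
    mul_le_mul_of_nonneg_right hB3 (sq_nonneg u)
  have hu2 : |u| ^ 2 ≤ 2 * s ^ 2 + 2 * (|h x| * |u|) := by
    rw [sq_abs]
    linarith [key, habs1, habs2, hd3, sq_nonneg (h x)]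
  have htu : |u| ≤ 2 * |h x| + 2 * s :=
    aux_abs_u_bound _ _ _ (abs_nonneg u) (abs_nonneg (h x)) hspos hu2
  have hprod : s * |u + s| ≤ |u ^ 2 - s ^ 2| := by
    have e1 : u ^ 2 - s ^ 2 = (u + s) * (u - s) := by ring
    rw [e1, abs_mul, abs_of_nonpos (by linarith : u - s ≤ 0)]
    calc s * |u + s| = |u + s| * s := by ring
      _ ≤ |u + s| * -(u - s) := mul_le_mul_of_nonneg_left (by linarith) (abs_nonneg _)
  have hM : |u ^ 2 - s ^ 2| ≤ |h x| * |u| + |deriv h x| * u ^ 2 / 6 + (h x) ^ 2 / 6 := by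
    apply abs_le.mpr
    constructor <;> linarith [key, habs1, habs1', habs2, habs2', sq_nonneg (h x)]
  -- final assembly
  have hu' : |u| ≤ 4 * b * |x| ^ 3 + 2 * s := by linarith
  have hB' : |deriv h x| ≤ 4 * b * |x| ^ 2 := by rw [sq_abs]; exact hB
  have hsX : β * |x| ^ 2 ≤ 2 * s := by
    have h2 : (β * |x| ^ 2 / 2) ^ 2 ≤ 2 * (E + G x) := by
      have e : (β * |x| ^ 2 / 2) ^ 2 = β ^ 2 * (x ^ 2) ^ 2 / 4 := by
        rw [show (β * |x| ^ 2 / 2) ^ 2 = β ^ 2 * (|x| ^ 2) ^ 2 / 4 from by ring, sq_abs]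
      rw [e, hβ2]
      linarith [hGlow, hE0]
    have h3 : β * |x| ^ 2 / 2 ≤ s := by
      rw [show β * |x| ^ 2 / 2 = Real.sqrt ((β * |x| ^ 2 / 2) ^ 2) from
        (Real.sqrt_sq (by positivity)).symm, hsdef]
      exact Real.sqrt_le_sqrt h2
    linarith
  have hγs : |x| ^ 2 ≤ 2 * γ * s := by
    have h1 := mul_le_mul_of_nonneg_left hsX hγpos.le
    have e : γ * (β * |x| ^ 2) = |x| ^ 2 := by
      rw [← mul_assoc, hγβ, one_mul]
    linarith
  have hX43 : |x| ^ 4 ≤ |x| ^ 3 := pow_le_pow_of_le_one hX hx1 (by norm_num)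
  have hX86 : |x| ^ 8 ≤ |x| ^ 6 := pow_le_pow_of_le_one hX hx1 (by norm_num)
  have hX53 : |x| ^ 5 ≤ |x| ^ 3 := pow_le_pow_of_le_one hX hx1 (by norm_num)
  have hx6 : |x| ^ 6 ≤ 2 * γ * s * |x| ^ 3 := by
    have h1 := mul_le_mul hX43 hγs (by positivity) (by positivity)
    linarith [h1]
  have m1 : |h x| * |u| ≤ 2 * b * |x| ^ 3 * (4 * b * |x| ^ 3 + 2 * s) :=
    mul_le_mul hA hu' (abs_nonneg u) (by positivity)
  have m2 : u ^ 2 ≤ (4 * b * |x| ^ 3 + 2 * s) ^ 2 := by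
    rw [← sq_abs u]; exact pow_le_pow_left₀ (abs_nonneg u) hu' 2
  have m3 : |deriv h x| * u ^ 2 ≤ 4 * b * |x| ^ 2 * (4 * b * |x| ^ 3 + 2 * s) ^ 2 :=
    mul_le_mul hB' m2 (sq_nonneg u) (by positivity)
  have m4 : (h x) ^ 2 ≤ (2 * b * |x| ^ 3) ^ 2 := by
    rw [← sq_abs (h x)]; exact pow_le_pow_left₀ (abs_nonneg _) hA 2
  have c1 := mul_le_mul_of_nonneg_left hx6 (show (0:ℝ) ≤ b ^ 2 by positivity)
  have c2 := mul_le_mul_of_nonneg_left hx6 (show (0:ℝ) ≤ b ^ 3 by positivity)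
  have c3 := mul_le_mul_of_nonneg_left hX86 (show (0:ℝ) ≤ b ^ 3 by positivity)
  have c4 := mul_le_mul_of_nonneg_left hX53 (show (0:ℝ) ≤ b ^ 2 * s by positivity)
  have main : s * |u + s| ≤
      (γ * (18*b^2 + 22*b^3) + 11*b^2 + 7*b + 1) * (s ^ 2 * |x| ^ 2 + s * |x| ^ 3) :=
    aux_main_bound b γ s |x| (|h x| * |u|) (|deriv h x| * u ^ 2) ((h x) ^ 2) (s * |u + s|)
      hb hγpos hspos hX (by linarith [hprod, hM]) m1 m3 m4 c1 c2 c3 c4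
  have goalx : x ^ 2 = |x| ^ 2 := (sq_abs x).symm
  rw [goalx]
  apply le_of_mul_le_mul_left _ hspos
  calc s * |u + s| ≤
      (γ * (18*b^2 + 22*b^3) + 11*b^2 + 7*b + 1) * (s ^ 2 * |x| ^ 2 + s * |x| ^ 3) := main
    _ = s * ((γ * (18*b^2 + 22*b^3) + 11*b^2 + 7*b + 1) * (s * |x| ^ 2 + |x| ^ 3)) := by ring
end
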